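/- arXiv:1406.0316 — 7 statements merged into one kernel-verified Lean document; each statement's English description precedes it below -/
import Mathlib

section
/- Let N > 2 be an integer, α > 2 and β ≥ α. Then the function Ṽ(x) = |x|^β/(1 + |x|^α) belongs to the reverse Hölder class B_∞: there exists a constant C > 0 such that for every ball B = B(x₀, r) ⊂ ℝ^N, the essential supremum of Ṽ over B is at most C·(1/|B|)∫_B Ṽ(x) dx, where |B| denotes the Lebesgue measure of B. -/
/-!
Write `Ṽ x = f ‖x‖` with `f t = t ^ β / (1 + t ^ α)`. Since `0 ≤ α ≤ β`, `f` is nondecreasing on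
`[0, ∞)` and satisfies `f t ≤ 4 ^ β * f (t / 4)`. On `B(x₀, r)` the supremum of `Ṽ` is at most
`f (‖x₀‖ + r)`, while `B(x₀, r)` contains a ball of radius `r / 4`, pushed away from the origin,
on which `‖x‖ ≥ (‖x₀‖ + r) / 4`. Hence the mean of `Ṽ` over `B(x₀, r)` is at least
`4 ^ (-N) * f ((‖x₀‖ + r) / 4) ≥ 4 ^ (-N - β) * f (‖x₀‖ + r)`.
-/

open Real MeasureTheory Metric Set Module

noncomputable def tildeVProfile (α β t : ℝ) : ℝ := t ^ β / (1 + t ^ α)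

lemma one_add_rpow_pos (α : ℝ) {t : ℝ} (ht : 0 ≤ t) : 0 < 1 + t ^ α := by
  have := rpow_nonneg ht α
  linarith

lemma tildeVProfile_nonneg (α β : ℝ) {t : ℝ} (ht : 0 ≤ t) : 0 ≤ tildeVProfile α β t :=
  div_nonneg (rpow_nonneg ht β) (one_add_rpow_pos α ht).le

section Profile

variable {α β : ℝ}

lemma continuousOn_tildeVProfile (hα : 0 ≤ α) (hβ : 0 ≤ β) :
    ContinuousOn (tildeVProfile α β) (Ici 0) :=
  (continuous_rpow_const hβ).continuousOn.div
    (continuous_const.add (continuous_rpow_const hα)).continuousOn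
    fun _ ht => (one_add_rpow_pos α ht).ne'

lemma monotoneOn_tildeVProfile (hα : 0 ≤ α) (hαβ : α ≤ β) :
    MonotoneOn (tildeVProfile α β) (Ici 0) := by
  rintro s (hs : 0 ≤ s) t (ht : 0 ≤ t) hst
  have hγ : 0 ≤ β - α := sub_nonneg.mpr hαβ
  have hsplit : ∀ u : ℝ, 0 ≤ u → u ^ β = u ^ (β - α) * u ^ α := fun u hu => by
    rw [← rpow_add_of_nonneg hu hγ hα, sub_add_cancel]
  have hpow : s ^ β ≤ t ^ β := rpow_le_rpow hs hst (hα.trans hαβ)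
  have hcross : s ^ β * t ^ α ≤ t ^ β * s ^ α := by
    rw [hsplit s hs, hsplit t ht]
    have := mul_le_mul_of_nonneg_right (rpow_le_rpow hs hst hγ)
      (mul_nonneg (rpow_nonneg hs α) (rpow_nonneg ht α))
    linarith
  unfold tildeVProfile
  rw [div_le_div_iff₀ (one_add_rpow_pos α hs) (one_add_rpow_pos α ht)]
  linarith

lemma tildeVProfile_le_rpow_mul_div (hα : 0 ≤ α) {c t : ℝ} (hc : 1 ≤ c)
    (ht : 0 ≤ t) : tildeVProfile α β t ≤ c ^ β * tildeVProfile α β (t / c) := by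
  have hc0 : 0 < c := one_pos.trans_le hc
  have htc : 0 ≤ t / c := div_nonneg ht hc0.le
  calc tildeVProfile α β t ≤ t ^ β / (1 + (t / c) ^ α) := by
        refine div_le_div_of_nonneg_left (rpow_nonneg ht β) (one_add_rpow_pos α htc) ?_
        gcongr
        exact div_le_self ht hc
    _ = c ^ β * tildeVProfile α β (t / c) := by
        rw [tildeVProfile, div_rpow ht hc0.le β]
        field_simp [(rpow_pos_of_pos hc0 β).ne']

end Profile

section Geometry

variable {E : Type*} [NormedAddCommGroup E] [NormedSpace ℝ E]

lemma exists_dist_eq_norm_eq_add [Nontrivial E] (x₀ : E) {s : ℝ} (hs : 0 ≤ s) :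
    ∃ y : E, dist y x₀ = s ∧ ‖y‖ = ‖x₀‖ + s := by
  obtain ⟨u, hu, hx₀⟩ : ∃ u : E, ‖u‖ = 1 ∧ x₀ = ‖x₀‖ • u := by
    rcases eq_or_ne x₀ 0 with rfl | h
    · obtain ⟨u, hu⟩ := exists_norm_eq E zero_le_one
      exact ⟨u, hu, by simp⟩
    · exact ⟨‖x₀‖⁻¹ • x₀, norm_smul_inv_norm h, (smul_inv_smul₀ (norm_ne_zero_iff.mpr h) x₀).symm⟩
  refine ⟨(‖x₀‖ + s) • u, ?_, ?_⟩
  · rw [dist_eq_norm]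
    nth_rewrite 2 [hx₀]
    rw [← sub_smul, add_sub_cancel_left, norm_smul, hu, mul_one, Real.norm_of_nonneg hs]
  · rw [norm_smul, hu, mul_one, Real.norm_of_nonneg (by positivity)]

lemma exists_ball_subset_ball_forall_le_norm [Nontrivial E] (x₀ : E) {r : ℝ} (hr : 0 ≤ r) :
    ∃ y : E, ball y (r / 4) ⊆ ball x₀ r ∧ ∀ x ∈ ball y (r / 4), (‖x₀‖ + r) / 4 ≤ ‖x‖ := by
  obtain ⟨y, hdist, hnorm⟩ := exists_dist_eq_norm_eq_add x₀ (s := r / 2) (by positivity)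
  refine ⟨y, ball_subset_ball' (by linarith), fun x hx => ?_⟩
  have := norm_sub_norm_le y x
  rw [← dist_eq_norm, dist_comm] at this
  linarith [mem_ball.mp hx, norm_nonneg x₀]

end Geometry

def ReverseHolderInftyWith {X : Type*} [PseudoMetricSpace X] [MeasurableSpace X]
    (μ : Measure X) (C : ℝ) (V : X → ℝ) : Prop :=
  ∀ (x₀ : X) (r : ℝ), 0 < r →
    essSup V (μ.restrict (ball x₀ r)) ≤ C * ((μ.real (ball x₀ r))⁻¹ * ∫ x in ball x₀ r, V x ∂μ)

section EssSup

variable {E : Type*} [SeminormedAddCommGroup E] [MeasurableSpace E] [OpensMeasurableSpace E]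
  (μ : Measure E) [μ.IsOpenPosMeasure]

lemma essSup_comp_norm_restrict_ball_le {g : ℝ → ℝ} (hg : MonotoneOn g (Ici 0)) (x₀ : E)
    {r : ℝ} (hr : 0 < r) :
    essSup (fun x => g ‖x‖) (μ.restrict (ball x₀ r)) ≤ g (‖x₀‖ + r) := by
  have : (ae (μ.restrict (ball x₀ r))).NeBot := by
    rw [ae_neBot, Ne, Measure.restrict_eq_zero]
    exact (measure_ball_pos μ x₀ hr).ne'
  refine essSup_le_of_ae_le _ ?_ (Filter.isCoboundedUnder_le_of_le _
    fun x => hg self_mem_Ici (norm_nonneg x) (norm_nonneg x))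
  filter_upwards [ae_restrict_mem measurableSet_ball] with x hx
  refine hg (norm_nonneg x) (mem_Ici.mpr (by positivity)) ?_
  linarith [norm_sub_norm_le x x₀, mem_ball_iff_norm.mp hx]

end EssSup

section Radial

variable {E : Type*} [NormedAddCommGroup E] [NormedSpace ℝ E] [FiniteDimensional ℝ E]
  [MeasurableSpace E] [BorelSpace E] (μ : Measure E) [μ.IsAddHaarMeasure]

lemma addHaar_real_ball_mul_of_pos (x y : E) {c : ℝ} (hc : 0 < c) (r : ℝ) :
    μ.real (ball y (c * r)) = c ^ finrank ℝ E * μ.real (ball x r) := by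
  rw [measureReal_def, measureReal_def, Measure.addHaar_ball_mul_of_pos μ y hc,
    Measure.addHaar_ball_center μ x, ENNReal.toReal_mul, ENNReal.toReal_ofReal (by positivity)]

theorem reverseHolderInftyWith_comp_norm [Nontrivial E] {g : ℝ → ℝ} {D : ℝ} (hD : 0 ≤ D)
    (hg_cont : ContinuousOn g (Ici 0)) (hg_mono : MonotoneOn g (Ici 0)) (hg_zero : 0 ≤ g 0)
    (hg_doubling : ∀ t, 0 ≤ t → g t ≤ D * g (t / 4)) :
    ReverseHolderInftyWith μ (D * 4 ^ finrank ℝ E) (fun x => g ‖x‖) := by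
  intro x₀ r hr
  set M := ‖x₀‖ + r
  set I := ∫ x in ball x₀ r, g ‖x‖ ∂μ
  obtain ⟨y, hsub, hlow⟩ := exists_ball_subset_ball_forall_le_norm x₀ hr.le
  have hg_nonneg : ∀ x : E, 0 ≤ g ‖x‖ := fun x =>
    hg_zero.trans (hg_mono self_mem_Ici (norm_nonneg x) (norm_nonneg x))
  have hint : IntegrableOn (fun x => g ‖x‖) (ball x₀ r) μ :=
    ((hg_cont.comp_continuous continuous_norm norm_nonneg).continuousOn.integrableOn_compact
      (isCompact_closedBall x₀ r)).mono_set ball_subset_closedBall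
  have hsmall : μ.real (ball y (r / 4)) = (4 ^ finrank ℝ E)⁻¹ * μ.real (ball x₀ r) := by
    rw [div_eq_inv_mul, addHaar_real_ball_mul_of_pos μ x₀ y (by norm_num), inv_pow]
  have hmean : g (M / 4) * μ.real (ball y (r / 4)) ≤ I :=
    (setIntegral_ge_of_const_le_real measurableSet_ball measure_ball_lt_top.ne
      (fun x hx => hg_mono (mem_Ici.mpr (by positivity)) (norm_nonneg x) (hlow x hx))
      (hint.mono_set hsub)).trans
    (setIntegral_mono_set hint (.of_forall hg_nonneg) hsub.eventuallyLE)
  have hvol : 0 < μ.real (ball x₀ r) :=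
    ENNReal.toReal_pos (measure_ball_pos μ x₀ hr).ne' measure_ball_lt_top.ne
  calc essSup (fun x => g ‖x‖) (μ.restrict (ball x₀ r)) ≤ g M :=
        essSup_comp_norm_restrict_ball_le μ hg_mono x₀ hr
    _ ≤ D * g (M / 4) := hg_doubling M (by positivity)
    _ = D * (4 ^ finrank ℝ E * ((μ.real (ball x₀ r))⁻¹ *
          (g (M / 4) * ((4 ^ finrank ℝ E)⁻¹ * μ.real (ball x₀ r))))) := by
        field_simp
    _ ≤ D * 4 ^ finrank ℝ E * ((μ.real (ball x₀ r))⁻¹ * I) := by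
        rw [mul_assoc D]
        gcongr
        rwa [← hsmall]

end Radial

/-- For `N > 2`, `α > 2`, `β ≥ α`, the function
`Ṽ(x) = |x|^β / (1 + |x|^α)` belongs to the reverse Hölder class `B_∞`:
there exists `C > 0` such that for every ball `B(x₀, r) ⊂ ℝ^N`,
`‖Ṽ‖_{L^∞(B)} ≤ C (1/|B|) ∫_B Ṽ`. -/
theorem tildeV_mem_Binfty (N : ℕ) (hN : 2 < N) (α β : ℝ) (hα : 2 < α) (hβ : α ≤ β) :
    ∃ C : ℝ, 0 < C ∧ ∀ (x₀ : EuclideanSpace ℝ (Fin N)) (r : ℝ), 0 < r →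
      essSup (fun x : EuclideanSpace ℝ (Fin N) => ‖x‖ ^ β / (1 + ‖x‖ ^ α))
          (volume.restrict (Metric.ball x₀ r))
        ≤ C * (((volume (Metric.ball x₀ r)).toReal)⁻¹ *
            ∫ x in Metric.ball x₀ r, ‖x‖ ^ β / (1 + ‖x‖ ^ α)) := by
  have hα₀ : 0 ≤ α := by linarith
  have : NeZero N := ⟨by omega⟩
  have hRH := reverseHolderInftyWith_comp_norm (volume : Measure (EuclideanSpace ℝ (Fin N)))
    (by positivity) (continuousOn_tildeVProfile hα₀ (hα₀.trans hβ))
    (monotoneOn_tildeVProfile hα₀ hβ)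
    (tildeVProfile_nonneg α β le_rfl)
    (fun t ht => tildeVProfile_le_rpow_mul_div hα₀ (c := 4) (by norm_num) ht)
  rw [finrank_euclideanSpace_fin] at hRH
  exact ⟨_, by positivity, hRH⟩
end

section
/- Let N > 2 be an integer, α > 2, β > 0, and let 1 < q < ∞ satisfy β − α > −N/q. Then the function Ṽ(x) = |x|^β/(1 + |x|^α) belongs to the reverse Hölder class B_q: there exists a constant C > 0 such that for every ball B ⊂ ℝ^N, ((1/|B|)∫_B Ṽ(x)^q dx)^{1/q} ≤ C (1/|B|)∫_B Ṽ(x) dx. In particular Ṽ ∈ B_{N/2} whenever β − α > −2, and Ṽ ∈ B_N whenever β − α > −1. -/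
/-!
Write `Ṽ x = v ‖x‖` with `v t = t ^ β / (1 + t ^ α)` (`v = radialProfile α β`). If `s` and `t`
agree up to a factor `c ≥ 1`, then `v t ≤ c ^ (β + α) * v s`. Hence on a ball `B(x₀, r)` with
`2 r ≤ ‖x₀‖` the function `Ṽ` stays within a constant factor of `v ‖x₀‖`, and so do both means.
On a ball with `‖x₀‖ < 2 r` both means are comparable to `v r`: the mean of `Ṽ` from below, on a
sub-ball of radius `r / 4` whose points have norm between `r / 4` and `4 r`; the mean of `Ṽ ^ q`
from above, over `B(0, 3 r)`, by the decay bound `v t ≤ (t / R) ^ (β - α) * v R` for `t ≤ R`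
together with the exact value `d / (d + γ) * R ^ γ` of the mean of `‖x‖ ^ γ` over `B(0, R)`,
which is finite precisely because `γ = (β - α) q > -d`.
-/

open Real MeasureTheory Metric Module

noncomputable def radialProfile (α β t : ℝ) : ℝ := t ^ β / (1 + t ^ α)

section Profile

variable {α β : ℝ}

lemma radialProfile_nonneg {t : ℝ} (ht : 0 ≤ t) : 0 ≤ radialProfile α β t := by
  unfold radialProfile; positivity

lemma continuous_radialProfile_norm {E : Type*} [SeminormedAddCommGroup E] (hα : 0 ≤ α)
    (hβ : 0 ≤ β) : Continuous fun x : E => radialProfile α β ‖x‖ :=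
  ((continuous_rpow_const hβ).comp continuous_norm).div
    (continuous_const.add ((continuous_rpow_const hα).comp continuous_norm)) fun x => by positivity

lemma radialProfile_le_rpow_mul (hα : 0 ≤ α) (hβ : 0 ≤ β) {c s t : ℝ} (hc : 1 ≤ c)
    (hs : 0 < s) (hts : t ≤ c * s) (hst : s ≤ c * t) :
    radialProfile α β t ≤ c ^ (β + α) * radialProfile α β s := by
  have hc₀ : 0 < c := one_pos.trans_le hc
  have ht : 0 < t := pos_of_mul_pos_right (hs.trans_le hst) hc₀.le
  have hβ' : t ^ β ≤ c ^ β * s ^ β := by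
    rw [← mul_rpow hc₀.le hs.le]; exact rpow_le_rpow ht.le hts hβ
  have hα' : s ^ α ≤ c ^ α * t ^ α := by
    rw [← mul_rpow hc₀.le ht.le]; exact rpow_le_rpow hs.le hst hα
  have hcα : 1 ≤ c ^ α := one_le_rpow hc hα
  unfold radialProfile
  rw [rpow_add hc₀, mul_div_assoc', div_le_div_iff₀ (by positivity) (by positivity)]
  calc t ^ β * (1 + s ^ α) ≤ (c ^ β * s ^ β) * (c ^ α * (1 + t ^ α)) := by
        gcongr; nlinarith [rpow_nonneg ht.le α]
    _ = c ^ β * c ^ α * s ^ β * (1 + t ^ α) := by ring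

lemma radialProfile_le_div_rpow_mul (hα : 0 ≤ α) (hβ : 0 < β) {t R : ℝ} (ht : 0 ≤ t)
    (htR : t ≤ R) : radialProfile α β t ≤ (t / R) ^ (β - α) * radialProfile α β R := by
  rcases ht.eq_or_lt with rfl | ht
  · simp only [radialProfile, zero_rpow hβ.ne', zero_div]
    exact mul_nonneg (rpow_nonneg le_rfl _) (radialProfile_nonneg (ht.trans htR))
  have hR : 0 < R := ht.trans_le htR
  have htαR : t ^ α ≤ R ^ α := rpow_le_rpow ht.le htR hα
  unfold radialProfile
  rw [div_rpow ht.le hR.le, rpow_sub ht, rpow_sub hR, div_le_iff₀ (by positivity)]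
  field_simp
  nlinarith

end Profile

lemma exists_dist_eq_le_norm {E : Type*} [NormedAddCommGroup E] [NormedSpace ℝ E]
    [Nontrivial E] (x₀ : E) {r : ℝ} (hr : 0 ≤ r) : ∃ z : E, dist z x₀ = r ∧ r ≤ ‖z‖ := by
  obtain ⟨e, he⟩ := exists_norm_eq E hr
  have htwo : 2 * r ≤ ‖x₀ + e‖ + ‖x₀ - e‖ := by
    calc 2 * r = ‖(x₀ + e) - (x₀ - e)‖ := by
          rw [add_sub_sub_cancel, ← two_smul ℝ e, norm_smul, he, Real.norm_two]
      _ ≤ ‖x₀ + e‖ + ‖x₀ - e‖ := norm_sub_le _ _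
  rcases le_or_gt r ‖x₀ + e‖ with h | h
  · exact ⟨x₀ + e, by rw [dist_eq_norm, add_sub_cancel_left, he], h⟩
  · exact ⟨x₀ - e, by rw [dist_eq_norm, sub_sub_cancel_left, norm_neg, he], by linarith⟩

lemma rpow_one_div_le_of_le_mul_rpow {q A a w K L : ℝ} (hq : 0 < q) (hA : 0 ≤ A) (hK : 0 ≤ K)
    (hw : 0 ≤ w) (hAw : A ≤ K * w ^ q) (hwa : w ≤ L * a) :
    A ^ (1 / q) ≤ K ^ (1 / q) * L * a :=
  calc A ^ (1 / q) ≤ (K * w ^ q) ^ (1 / q) := rpow_le_rpow hA hAw (by positivity)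
    _ = K ^ (1 / q) * w := by
        rw [mul_rpow hK (rpow_nonneg hw q), ← rpow_mul hw, mul_one_div_cancel hq.ne', rpow_one]
    _ ≤ K ^ (1 / q) * (L * a) := by gcongr
    _ = K ^ (1 / q) * L * a := (mul_assoc ..).symm

section Average

variable {X : Type*} [MeasurableSpace X] {μ : Measure X} {s t : Set X} {f g : X → ℝ}

lemma setAverage_mono_on (hs : MeasurableSet s) (hf : IntegrableOn f s μ)
    (hg : IntegrableOn g s μ) (h : ∀ x ∈ s, f x ≤ g x) :
    ⨍ x in s, f x ∂μ ≤ ⨍ x in s, g x ∂μ := by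
  simp only [setAverage_eq, smul_eq_mul]
  exact mul_le_mul_of_nonneg_left (setIntegral_mono_on hf hg hs h) (by positivity)

lemma setAverage_le_of_forall_le (hs : MeasurableSet s) (hμ₀ : μ s ≠ 0) (hμ : μ s ≠ ⊤)
    (hf : IntegrableOn f s μ) {c : ℝ} (h : ∀ x ∈ s, f x ≤ c) : ⨍ x in s, f x ∂μ ≤ c :=
  (setAverage_mono_on hs hf (integrableOn_const hμ) h).trans_eq (setAverage_const hμ₀ hμ c)

lemma le_setAverage_of_forall_le (hs : MeasurableSet s) (hμ₀ : μ s ≠ 0) (hμ : μ s ≠ ⊤)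
    (hf : IntegrableOn f s μ) {c : ℝ} (h : ∀ x ∈ s, c ≤ f x) : c ≤ ⨍ x in s, f x ∂μ :=
  (setAverage_const hμ₀ hμ c).symm.trans_le (setAverage_mono_on hs (integrableOn_const hμ) hf h)

lemma setAverage_le_of_subset (hst : s ⊆ t) (ht : MeasurableSet t) (hμ : μ t ≠ ⊤)
    (hf : IntegrableOn f t μ) (hf₀ : ∀ x ∈ t, 0 ≤ f x) :
    ⨍ x in s, f x ∂μ ≤ μ.real t / μ.real s * ⨍ x in t, f x ∂μ := by
  rw [div_mul_eq_mul_div, ← smul_eq_mul, measure_smul_setAverage f hμ, setAverage_eq,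
    smul_eq_mul, inv_mul_eq_div]
  exact div_le_div_of_nonneg_right
    (setIntegral_mono_set hf (ae_restrict_of_forall_mem ht hf₀) hst.eventuallyLE) measureReal_nonneg

lemma setAverage_nonneg (hf : ∀ x, 0 ≤ f x) : 0 ≤ ⨍ x in s, f x ∂μ :=
  integral_nonneg hf

end Average

section Ball

variable {E : Type*} [NormedAddCommGroup E] [NormedSpace ℝ E] [FiniteDimensional ℝ E]
  [MeasurableSpace E] (μ : Measure E) [μ.IsAddHaarMeasure]

lemma measureReal_ball_pos (x : E) {r : ℝ} (hr : 0 < r) : 0 < μ.real (ball x r) :=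
  ENNReal.toReal_pos (measure_ball_pos μ x hr).ne' measure_ball_lt_top.ne

variable [BorelSpace E]

lemma Continuous.integrableOn_ball {f : E → ℝ} (hf : Continuous f) (x : E) (r : ℝ) :
    IntegrableOn f (ball x r) μ :=
  (hf.continuousOn.integrableOn_compact (isCompact_closedBall x r)).mono_set
    ball_subset_closedBall

lemma measureReal_ball_mul (x y : E) {c : ℝ} (hc : 0 < c) (r : ℝ) :
    μ.real (ball x (c * r)) = c ^ finrank ℝ E * μ.real (ball y r) := by
  rw [measureReal_def, Measure.addHaar_ball_mul_of_pos μ x hc, ENNReal.toReal_mul,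
    ENNReal.toReal_ofReal (by positivity), Measure.addHaar_real_ball_center μ y,
    measureReal_def]

lemma rpow_setAverage_radialProfile_le_of_two_mul_le_norm {α β q : ℝ} (hα : 0 ≤ α)
    (hβ : 0 ≤ β) (hq : 0 < q) {x₀ : E} {r : ℝ} (hr : 0 < r) (hfar : 2 * r ≤ ‖x₀‖) :
    (⨍ x in ball x₀ r, radialProfile α β ‖x‖ ^ q ∂μ) ^ (1 / q)
      ≤ 4 ^ (β + α) * ⨍ x in ball x₀ r, radialProfile α β ‖x‖ ∂μ := by
  have hx₀ : 0 < ‖x₀‖ := by linarith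
  have hcomp : ∀ x ∈ ball x₀ r, ‖x‖ ≤ 2 * ‖x₀‖ ∧ ‖x₀‖ ≤ 2 * ‖x‖ := fun x hx => by
    rw [mem_ball, dist_eq_norm] at hx
    have h₁ := norm_sub_norm_le x x₀
    have h₂ := norm_sub_norm_le x₀ x
    rw [norm_sub_rev] at h₂
    constructor <;> linarith
  have hμ₀ := (measure_ball_pos μ x₀ hr).ne'
  have hμ := (measure_ball_lt_top (μ := μ) (x := x₀) (r := r)).ne
  have hV := continuous_radialProfile_norm (E := E) hα hβ
  have hup : ⨍ x in ball x₀ r, radialProfile α β ‖x‖ ^ q ∂μ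
      ≤ 1 * (2 ^ (β + α) * radialProfile α β ‖x₀‖) ^ q := by
    rw [one_mul]
    refine setAverage_le_of_forall_le measurableSet_ball hμ₀ hμ
      ((hV.rpow_const fun _ => .inr hq.le).integrableOn_ball μ x₀ r) fun x hx => ?_
    exact rpow_le_rpow (radialProfile_nonneg (norm_nonneg x))
      (radialProfile_le_rpow_mul hα hβ one_le_two hx₀ (hcomp x hx).1 (hcomp x hx).2) hq.le
  have hlow : radialProfile α β ‖x₀‖
      ≤ 2 ^ (β + α) * ⨍ x in ball x₀ r, radialProfile α β ‖x‖ ∂μ := by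
    rw [← inv_mul_le_iff₀ (by positivity)]
    refine le_setAverage_of_forall_le measurableSet_ball hμ₀ hμ (hV.integrableOn_ball μ x₀ r)
      fun x hx => ?_
    rw [inv_mul_le_iff₀ (by positivity)]
    exact radialProfile_le_rpow_mul hα hβ one_le_two (by linarith [hcomp x hx])
      (hcomp x hx).2 (hcomp x hx).1
  have key := rpow_one_div_le_of_le_mul_rpow (L := 2 ^ (β + α) * 2 ^ (β + α)) hq
    (setAverage_nonneg fun x => rpow_nonneg (radialProfile_nonneg (norm_nonneg x)) q)
    zero_le_one (mul_nonneg (by positivity) (radialProfile_nonneg hx₀.le)) hup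
    (by rw [mul_assoc]; gcongr)
  rwa [one_rpow, one_mul, ← mul_rpow zero_le_two zero_le_two, two_mul, two_add_two_eq_four]
    at key

variable [Nontrivial E]

lemma integrableOn_ball_zero_norm_rpow {γ : ℝ} (hγ : -(finrank ℝ E : ℝ) < γ) (R : ℝ) :
    IntegrableOn (fun x : E => ‖x‖ ^ γ) (ball 0 R) μ :=
  integrableOn_ball_of_norm_le_rpow (C := 1) (α := -γ) finrank_pos (by linarith)
    (.of_forall fun x => by simp [abs_of_nonneg (rpow_nonneg (norm_nonneg x) γ)])
    (continuous_norm.measurable.pow_const γ).aestronglyMeasurable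

lemma setIntegral_ball_zero_norm_rpow {γ R : ℝ} (hγ : -(finrank ℝ E : ℝ) < γ) (hR : 0 < R) :
    ∫ x in ball (0 : E) R, ‖x‖ ^ γ ∂μ
      = finrank ℝ E / (finrank ℝ E + γ) * R ^ γ * μ.real (ball 0 R) := by
  set d := finrank ℝ E
  have hd : 0 < d := finrank_pos
  have hball : ∫ x in ball (0 : E) R, ‖x‖ ^ γ ∂μ
      = ∫ x, (Set.Iio R).indicator (fun t => t ^ γ) ‖x‖ ∂μ := by
    rw [← integral_indicator measurableSet_ball]
    congr 1 with x
    simp [Set.indicator]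
  have hradial : ∫ y in Set.Ioi 0, y ^ (d - 1) • (Set.Iio R).indicator (fun t => t ^ γ) y
      = R ^ ((d : ℝ) + γ) / (d + γ) := by
    rw [setIntegral_congr_fun measurableSet_Ioi
      (g := (Set.Iio R).indicator fun y => y ^ ((d : ℝ) - 1 + γ)) fun y (hy : 0 < y) => ?_]
    · rw [setIntegral_indicator measurableSet_Iio, Set.Ioi_inter_Iio,
        ← integral_Ioc_eq_integral_Ioo, ← intervalIntegral.integral_of_le hR.le, integral_rpow (.inl (by linarith)),
        zero_rpow (by linarith)]
      ring_nf
    · by_cases hyR : y < R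
      · simp [hyR, smul_eq_mul, ← rpow_natCast, ← rpow_add hy, Nat.cast_sub hd]
      · simp [hyR]
  have hvol : μ.real (ball (0 : E) R) = R ^ d * μ.real (ball 0 1) := by
    simpa using measureReal_ball_mul μ (0 : E) 0 hR 1
  rw [hball, integral_fun_norm_addHaar, hradial, hvol, rpow_add hR, rpow_natCast, nsmul_eq_mul,
    smul_eq_mul]
  field_simp
  ring

lemma setAverage_ball_zero_radialProfile_rpow_le {α β q R : ℝ} (hα : 0 ≤ α) (hβ : 0 < β)
    (hq : 0 < q) (hγ : -(finrank ℝ E : ℝ) < (β - α) * q) (hR : 0 < R) :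
    ⨍ x in ball (0 : E) R, radialProfile α β ‖x‖ ^ q ∂μ
      ≤ finrank ℝ E / (finrank ℝ E + (β - α) * q) * radialProfile α β R ^ q := by
  set γ := (β - α) * q
  have hdecay : ∀ x ∈ ball (0 : E) R,
      radialProfile α β ‖x‖ ^ q ≤ ‖x‖ ^ γ * (radialProfile α β R ^ q / R ^ γ) := fun x hx => by
    calc radialProfile α β ‖x‖ ^ q ≤ ((‖x‖ / R) ^ (β - α) * radialProfile α β R) ^ q :=
          rpow_le_rpow (radialProfile_nonneg (norm_nonneg x))
            (radialProfile_le_div_rpow_mul hα hβ (norm_nonneg x) (mem_ball_zero_iff.1 hx).le) hq.le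
      _ = ‖x‖ ^ γ * (radialProfile α β R ^ q / R ^ γ) := by
          rw [mul_rpow (by positivity) (radialProfile_nonneg hR.le), ← rpow_mul (by positivity),
            div_rpow (norm_nonneg x) hR.le]
          ring
  have hint : IntegrableOn (fun x : E => ‖x‖ ^ γ) (ball 0 R) μ :=
    integrableOn_ball_zero_norm_rpow μ hγ R
  have hVq := (continuous_radialProfile_norm (E := E) hα hβ.le).rpow_const fun _ => .inr hq.le
  calc ⨍ x in ball (0 : E) R, radialProfile α β ‖x‖ ^ q ∂μ
      ≤ ⨍ x in ball (0 : E) R, ‖x‖ ^ γ * (radialProfile α β R ^ q / R ^ γ) ∂μ :=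
        setAverage_mono_on measurableSet_ball (hVq.integrableOn_ball μ 0 R) (hint.mul_const _)
          hdecay
    _ = (⨍ x in ball (0 : E) R, ‖x‖ ^ γ ∂μ) * (radialProfile α β R ^ q / R ^ γ) := by
        simp only [setAverage_eq, smul_eq_mul, integral_mul_const, mul_assoc]
    _ = _ := by
        rw [setAverage_eq, setIntegral_ball_zero_norm_rpow μ hγ hR, smul_eq_mul]
        field_simp [(measureReal_ball_pos μ 0 hR).ne']

lemma setAverage_radialProfile_rpow_le_of_norm_lt_two_mul {α β q : ℝ} (hα : 0 ≤ α) (hβ : 0 < β)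
    (hq : 0 < q) (hγ : -(finrank ℝ E : ℝ) < (β - α) * q) {x₀ : E} {r : ℝ} (hr : 0 < r)
    (hnear : ‖x₀‖ < 2 * r) :
    ⨍ x in ball x₀ r, radialProfile α β ‖x‖ ^ q ∂μ
      ≤ finrank ℝ E / (finrank ℝ E + (β - α) * q) * 3 ^ finrank ℝ E
          * (3 ^ (β + α) * radialProfile α β r) ^ q := by
  set d := finrank ℝ E
  have hsub : ball x₀ r ⊆ ball 0 (3 * r) := fun x hx => by
    rw [mem_ball, dist_eq_norm] at hx
    rw [mem_ball_zero_iff]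
    linarith [norm_sub_norm_le x x₀]
  have hprofile : radialProfile α β (3 * r) ^ q ≤ (3 ^ (β + α) * radialProfile α β r) ^ q :=
    rpow_le_rpow (radialProfile_nonneg (by positivity))
      (radialProfile_le_rpow_mul hα hβ.le (by norm_num) hr le_rfl (by linarith)) hq.le
  have hVq := (continuous_radialProfile_norm (E := E) hα hβ.le).rpow_const fun _ => .inr hq.le
  calc ⨍ x in ball x₀ r, radialProfile α β ‖x‖ ^ q ∂μ
      ≤ μ.real (ball 0 (3 * r)) / μ.real (ball x₀ r)
          * ⨍ x in ball 0 (3 * r), radialProfile α β ‖x‖ ^ q ∂μ :=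
        setAverage_le_of_subset hsub measurableSet_ball measure_ball_lt_top.ne
          (hVq.integrableOn_ball μ 0 (3 * r))
          fun x _ => rpow_nonneg (radialProfile_nonneg (norm_nonneg x)) q
    _ = 3 ^ d * ⨍ x in ball 0 (3 * r), radialProfile α β ‖x‖ ^ q ∂μ := by
        rw [measureReal_ball_mul μ 0 x₀ three_pos r, mul_div_assoc,
          div_self (measureReal_ball_pos μ x₀ hr).ne', mul_one]
    _ ≤ 3 ^ d * (d / (d + (β - α) * q) * radialProfile α β (3 * r) ^ q) := by
        gcongr
        exact setAverage_ball_zero_radialProfile_rpow_le μ hα hβ hq hγ (by positivity)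
    _ ≤ 3 ^ d * (d / (d + (β - α) * q) * (3 ^ (β + α) * radialProfile α β r) ^ q) := by
        have : 0 < d + (β - α) * q := by linarith
        gcongr
    _ = _ := by ring

lemma radialProfile_le_setAverage_of_norm_lt_two_mul {α β : ℝ} (hα : 0 ≤ α) (hβ : 0 ≤ β)
    {x₀ : E} {r : ℝ} (hr : 0 < r) (hnear : ‖x₀‖ < 2 * r) :
    radialProfile α β r
      ≤ 4 ^ (β + α) * 4 ^ finrank ℝ E * ⨍ x in ball x₀ r, radialProfile α β ‖x‖ ∂μ := by
  obtain ⟨z, hzx₀, hz⟩ := exists_dist_eq_le_norm x₀ (by positivity : 0 ≤ r / 2)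
  have hsub : ball z (r / 4) ⊆ ball x₀ r := ball_subset_ball' (by linarith)
  have hcomp : ∀ x ∈ ball z (r / 4), r ≤ 4 * ‖x‖ ∧ ‖x‖ ≤ 4 * r := fun x hx => by
    rw [mem_ball, dist_eq_norm] at hx
    rw [dist_eq_norm] at hzx₀
    have h₁ := norm_sub_norm_le x z
    have h₂ := norm_sub_norm_le z x
    have h₃ := norm_sub_norm_le z x₀
    rw [norm_sub_rev] at h₂
    constructor <;> linarith
  have hV := continuous_radialProfile_norm (E := E) hα hβ
  have hsmall : radialProfile α β r
      ≤ 4 ^ (β + α) * ⨍ x in ball z (r / 4), radialProfile α β ‖x‖ ∂μ := by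
    rw [← inv_mul_le_iff₀ (by positivity)]
    refine le_setAverage_of_forall_le measurableSet_ball
      (measure_ball_pos μ z (by positivity)).ne' measure_ball_lt_top.ne
      (hV.integrableOn_ball μ z (r / 4)) fun x hx => ?_
    rw [inv_mul_le_iff₀ (by positivity)]
    exact radialProfile_le_rpow_mul hα hβ (by norm_num) (by linarith [hcomp x hx])
      (hcomp x hx).1 (hcomp x hx).2
  have hratio : μ.real (ball x₀ r) / μ.real (ball z (r / 4)) = 4 ^ finrank ℝ E := by
    have h := measureReal_ball_mul μ x₀ z four_pos (r / 4)
    rw [mul_div_cancel₀ r four_ne_zero] at h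
    rw [h, mul_div_assoc, div_self (measureReal_ball_pos μ z (by positivity)).ne', mul_one]
  have hmono := setAverage_le_of_subset hsub measurableSet_ball measure_ball_lt_top.ne
    (hV.integrableOn_ball μ x₀ r) fun x _ => radialProfile_nonneg (norm_nonneg x)
  rw [hratio] at hmono
  calc radialProfile α β r
      ≤ 4 ^ (β + α) * ⨍ x in ball z (r / 4), radialProfile α β ‖x‖ ∂μ := hsmall
    _ ≤ 4 ^ (β + α) * (4 ^ finrank ℝ E * ⨍ x in ball x₀ r, radialProfile α β ‖x‖ ∂μ) := by
        gcongr
    _ = _ := (mul_assoc ..).symm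

lemma rpow_setAverage_radialProfile_le_of_norm_lt_two_mul {α β q : ℝ} (hα : 0 ≤ α) (hβ : 0 < β)
    (hq : 0 < q) (hγ : -(finrank ℝ E : ℝ) < (β - α) * q) {x₀ : E} {r : ℝ} (hr : 0 < r)
    (hnear : ‖x₀‖ < 2 * r) :
    (⨍ x in ball x₀ r, radialProfile α β ‖x‖ ^ q ∂μ) ^ (1 / q)
      ≤ (finrank ℝ E / (finrank ℝ E + (β - α) * q) * 3 ^ finrank ℝ E) ^ (1 / q)
          * (3 ^ (β + α) * (4 ^ (β + α) * 4 ^ finrank ℝ E))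
          * ⨍ x in ball x₀ r, radialProfile α β ‖x‖ ∂μ := by
  have hK : 0 ≤ finrank ℝ E / (finrank ℝ E + (β - α) * q) * 3 ^ finrank ℝ E := by
    have : 0 < finrank ℝ E + (β - α) * q := by linarith
    positivity
  exact rpow_one_div_le_of_le_mul_rpow hq
    (setAverage_nonneg fun x => rpow_nonneg (radialProfile_nonneg (norm_nonneg x)) q) hK
    (mul_nonneg (by positivity) (radialProfile_nonneg hr.le))
    (setAverage_radialProfile_rpow_le_of_norm_lt_two_mul μ hα hβ hq hγ hr hnear)
    ((mul_le_mul_of_nonneg_left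
      (radialProfile_le_setAverage_of_norm_lt_two_mul μ hα hβ.le hr hnear) (by positivity)).trans_eq
      (mul_assoc ..).symm)

end Ball

/-- For `N > 2`, `α > 2`, `β > 0` and `1 < q < ∞` with `β - α > -N/q`, the
function `Ṽ(x) = |x|^β / (1 + |x|^α)` belongs to the reverse Hölder class `B_q`: there exists
`C > 0` such that for every ball `B = B(x₀, r) ⊂ ℝ^N`,
`((1/|B|) ∫_B Ṽ^q)^{1/q} ≤ C (1/|B|) ∫_B Ṽ`. -/
theorem tildeV_mem_Bq (N : ℕ) (hN : 2 < N) (α β q : ℝ)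
    (hα : 2 < α) (hβ : 0 < β) (hq : 1 < q) (hcond : -((N : ℝ) / q) < β - α) :
    ∃ C : ℝ, 0 < C ∧ ∀ (x₀ : EuclideanSpace ℝ (Fin N)) (r : ℝ), 0 < r →
      (((volume (Metric.ball x₀ r)).toReal)⁻¹ *
          ∫ x in Metric.ball x₀ r, (‖x‖ ^ β / (1 + ‖x‖ ^ α)) ^ q) ^ (1 / q)
        ≤ C * (((volume (Metric.ball x₀ r)).toReal)⁻¹ *
            ∫ x in Metric.ball x₀ r, ‖x‖ ^ β / (1 + ‖x‖ ^ α)) := by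
  set d := finrank ℝ (EuclideanSpace ℝ (Fin N))
  have hd : d = N := finrank_euclideanSpace_fin
  have : Nontrivial (EuclideanSpace ℝ (Fin N)) := nontrivial_of_finrank_pos (R := ℝ) (by omega)
  have hq₀ : 0 < q := by linarith
  have hα₀ : 0 ≤ α := by linarith
  have hγ : -(d : ℝ) < (β - α) * q := by
    rw [← neg_div, div_lt_iff₀ hq₀] at hcond
    rwa [hd]
  refine ⟨max (4 ^ (β + α))
    ((d / (d + (β - α) * q) * 3 ^ d) ^ (1 / q) * (3 ^ (β + α) * (4 ^ (β + α) * 4 ^ d))),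
    lt_max_of_lt_left (by positivity), fun x₀ r hr => ?_⟩
  have hmean : 0 ≤ ⨍ x in ball x₀ r, radialProfile α β ‖x‖ :=
    setAverage_nonneg fun x => radialProfile_nonneg (norm_nonneg x)
  suffices h : (⨍ x in ball x₀ r, radialProfile α β ‖x‖ ^ q) ^ (1 / q)
      ≤ max _ _ * ⨍ x in ball x₀ r, radialProfile α β ‖x‖ by
    simpa only [setAverage_eq, smul_eq_mul, measureReal_def, radialProfile] using h
  rcases le_or_gt (2 * r) ‖x₀‖ with hfar | hnear
  · exact (rpow_setAverage_radialProfile_le_of_two_mul_le_norm volume hα₀ hβ.le hq₀ hr hfar).trans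
      (mul_le_mul_of_nonneg_right (le_max_left _ _) hmean)
  · exact (rpow_setAverage_radialProfile_le_of_norm_lt_two_mul volume hα₀ hβ hq₀ hγ hr hnear).trans
      (mul_le_mul_of_nonneg_right (le_max_right _ _) hmean)
end

section
/- Let N > 2 be an integer, α > 2 and β > α − 2. Then for every x ∈ ℝ^N the function f_x(r) = r^{2−N}∫_{B(x,r)} Ṽ(y) dy (r > 0) tends to 0 as r → 0⁺ and tends to +∞ as r → +∞. Consequently, the set {r > 0 : r^{2−N}∫_{B(x,r)} Ṽ(y) dy ≤ 1} is nonempty and bounded above, so its supremum R(x) satisfies 0 < R(x) < ∞ (equivalently, the Agmon-type function m(x) = 1/R(x) satisfies 0 < m(x) < ∞). -/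
open Real MeasureTheory Filter
open Metric Module Set Topology

/-!
Near `r = 0` the potential is bounded on `B(x, 1)`, so `∫_{B(x,r)} Ṽ = O(r^N)` and
`f_x(r) = O(r²)`. For large `r` the ball `B(x, r)` contains a ball of radius `r/8` lying in the
shell `r/4 ≤ |y| ≤ r`, on which `Ṽ(y) ≳ r^{β-α}`; hence `f_x(r) ≳ r^{β-α+2}`, which tends to
infinity because `β > α - 2`.
-/

/-- The centre `z` can be any point of norm `3r/8`. -/
theorem exists_ball_subset_ball_of_norm_mem_Icc {E : Type*} [NormedAddCommGroup E]
    [NormedSpace ℝ E] [Nontrivial E] {x : E} {r : ℝ} (hr : 4 * ‖x‖ ≤ r) :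
    ∃ z : E, ball z (r / 8) ⊆ ball x r ∧ ∀ y ∈ ball z (r / 8), ‖y‖ ∈ Icc (r / 4) r := by
  obtain ⟨z, hz⟩ := exists_norm_eq E (c := 3 * r / 8) (by linarith [norm_nonneg x])
  refine ⟨z, fun y hy => ?_, fun y hy => ?_⟩
  · rw [mem_ball] at hy ⊢
    linarith [dist_nonneg (x := y) (y := z), dist_triangle y z x, dist_le_norm_add_norm z x]
  · rw [mem_ball, dist_eq_norm] at hy
    constructor <;> linarith [norm_sub_norm_le z y, norm_sub_norm_le y z, norm_sub_rev y z]

section HaarBall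

variable {E : Type*} [NormedAddCommGroup E] [NormedSpace ℝ E] [MeasurableSpace E] [BorelSpace E]
  [FiniteDimensional ℝ E] (μ : Measure E) [μ.IsAddHaarMeasure]

theorem addHaar_real_ball_of_pos (x : E) {r : ℝ} (hr : 0 < r) :
    μ.real (ball x r) = r ^ finrank ℝ E * μ.real (ball 0 1) := by
  rw [measureReal_def, Measure.addHaar_ball_of_pos μ x hr, ENNReal.toReal_mul,
    ENNReal.toReal_ofReal (by positivity), measureReal_def]

theorem tendsto_rpow_mul_setIntegral_ball_nhdsGT_zero {V : E → ℝ} (hV : Continuous V) (x : E)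
    {s : ℝ} (hs : 0 < s + finrank ℝ E) :
    Tendsto (fun r : ℝ => r ^ s * ∫ y in ball x r, V y ∂μ) (𝓝[>] 0) (𝓝 0) := by
  obtain ⟨M, hM⟩ := (isCompact_closedBall x 1).exists_bound_of_continuousOn hV.continuousOn
  have hbound : ∀ r ∈ Ioo (0 : ℝ) 1,
      ‖r ^ s * ∫ y in ball x r, V y ∂μ‖ ≤ M * μ.real (ball (0 : E) 1) * r ^ (s + finrank ℝ E) := by
    intro r ⟨hr0, hr1⟩
    have hint : ‖∫ y in ball x r, V y ∂μ‖ ≤ M * μ.real (ball x r) :=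
      norm_setIntegral_le_of_norm_le_const measure_ball_lt_top fun y hy =>
        hM y (ball_subset_closedBall.trans (closedBall_subset_closedBall hr1.le) hy)
    rw [norm_mul, norm_of_nonneg (rpow_nonneg hr0.le _), rpow_add hr0, rpow_natCast]
    calc r ^ s * ‖∫ y in ball x r, V y ∂μ‖ ≤ r ^ s * (M * μ.real (ball x r)) := by gcongr
      _ = _ := by rw [addHaar_real_ball_of_pos μ x hr0]; ring
  have hpow : Tendsto (fun r : ℝ => r ^ (s + finrank ℝ E)) (𝓝[>] 0) (𝓝 0) := by
    simpa [zero_rpow hs.ne'] using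
      ((continuousAt_rpow_const 0 _ (Or.inr hs.le)).tendsto).mono_left nhdsWithin_le_nhds
  refine squeeze_zero_norm' ?_ (by simpa using hpow.const_mul (M * μ.real (ball (0 : E) 1)))
  filter_upwards [Ioo_mem_nhdsGT (zero_lt_one' ℝ)] with r hr
  exact hbound r hr

theorem le_setIntegral_ball_of_le_on_shell [Nontrivial E] {V : E → ℝ} (hV0 : 0 ≤ V)
    {x : E} {r c : ℝ} (hVi : IntegrableOn V (ball x r) μ) (hr : 4 * ‖x‖ ≤ r) (hr0 : 0 < r)
    (hVc : ∀ y, ‖y‖ ∈ Icc (r / 4) r → c ≤ V y) :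
    c * ((r / 8) ^ finrank ℝ E * μ.real (ball (0 : E) 1)) ≤ ∫ y in ball x r, V y ∂μ := by
  obtain ⟨z, hsub, hshell⟩ := exists_ball_subset_ball_of_norm_mem_Icc hr
  rw [← addHaar_real_ball_of_pos μ z (by positivity : 0 < r / 8)]
  calc c * μ.real (ball z (r / 8)) ≤ ∫ y in ball z (r / 8), V y ∂μ :=
        setIntegral_ge_of_const_le_real measurableSet_ball measure_ball_lt_top.ne
          (fun y hy => hVc y (hshell y hy)) (hVi.mono_set hsub)
    _ ≤ ∫ y in ball x r, V y ∂μ :=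
        setIntegral_mono_set hVi (ae_of_all _ hV0) hsub.eventuallyLE

theorem tendsto_rpow_mul_setIntegral_ball_atTop [Nontrivial E] {V : E → ℝ} (hV0 : 0 ≤ V)
    (hVi : LocallyIntegrable V μ) {c γ s R₀ : ℝ} (hc : 0 < c)
    (hVc : ∀ r ≥ R₀, ∀ y, ‖y‖ ∈ Icc (r / 4) r → c * r ^ γ ≤ V y)
    (hs : 0 < s + γ + finrank ℝ E) (x : E) :
    Tendsto (fun r : ℝ => r ^ s * ∫ y in ball x r, V y ∂μ) atTop atTop := by
  set C := c * μ.real (ball (0 : E) 1) / 8 ^ finrank ℝ E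
  have hC : 0 < C := by
    have : 0 < μ.real (ball (0 : E) 1) :=
      ENNReal.toReal_pos (measure_ball_pos μ 0 one_pos).ne' measure_ball_lt_top.ne
    positivity
  refine tendsto_atTop_mono' _ ?_ ((tendsto_rpow_atTop hs).const_mul_atTop hC)
  filter_upwards [eventually_ge_atTop (max 1 (max R₀ (4 * ‖x‖)))] with r hr
  simp only [max_le_iff] at hr
  obtain ⟨hr1, hrR, hrx⟩ := hr
  have hr0 : 0 < r := by linarith
  have hint := le_setIntegral_ball_of_le_on_shell μ hV0
    (hVi.integrableOn_isCompact (isCompact_closedBall x r) |>.mono_set ball_subset_closedBall)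
    hrx hr0 (hVc r hrR)
  calc C * r ^ (s + γ + finrank ℝ E)
      = r ^ s * (c * r ^ γ * ((r / 8) ^ finrank ℝ E * μ.real (ball (0 : E) 1))) := by
        simp only [C]
        rw [rpow_add hr0, rpow_add hr0, rpow_natCast, div_pow]
        field_simp
    _ ≤ r ^ s * ∫ y in ball x r, V y ∂μ := by gcongr

end HaarBall

theorem le_rpow_div_one_add_rpow {α β r t : ℝ} (hα : 0 ≤ α) (hβ : 0 ≤ β) (hr : 1 ≤ r)
    (ht : t ∈ Icc (r / 4) r) : 4 ^ (-β) / 2 * r ^ (β - α) ≤ t ^ β / (1 + t ^ α) := by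
  have hr0 : 0 < r := by linarith
  have ht0 : 0 ≤ t := by linarith [ht.1]
  have hnum : 4 ^ (-β) * r ^ β ≤ t ^ β := by
    calc 4 ^ (-β) * r ^ β = (r / 4) ^ β := by
          rw [div_rpow hr0.le (by norm_num), rpow_neg (by norm_num)]; ring
      _ ≤ t ^ β := rpow_le_rpow (by positivity) ht.1 hβ
  have hden : 1 + t ^ α ≤ 2 * r ^ α := by
    linarith [one_le_rpow hr hα, rpow_le_rpow ht0 ht.2 hα]
  calc 4 ^ (-β) / 2 * r ^ (β - α) = 4 ^ (-β) * r ^ β / (2 * r ^ α) := by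
        rw [rpow_sub hr0]; ring
    _ ≤ t ^ β / (1 + t ^ α) := div_le_div₀ (rpow_nonneg ht0 _) hnum (by positivity) hden

theorem continuous_rpow_norm_div_one_add_rpow_norm {E : Type*} [SeminormedAddCommGroup E]
    {α β : ℝ} (hα : 0 ≤ α) (hβ : 0 ≤ β) :
    Continuous fun y : E => ‖y‖ ^ β / (1 + ‖y‖ ^ α) :=
  (continuous_norm.rpow_const fun _ => Or.inr hβ).div
    (continuous_const.add (continuous_norm.rpow_const fun _ => Or.inr hα)) fun _ => by positivity

theorem nonempty_setOf_pos_and_le_of_tendsto_nhdsGT_zero {f : ℝ → ℝ}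
    (hf : Tendsto f (𝓝[>] 0) (𝓝 0)) {c : ℝ} (hc : 0 < c) : {r | 0 < r ∧ f r ≤ c}.Nonempty :=
  ((hf.eventually (ge_mem_nhds hc)).and self_mem_nhdsWithin).exists.imp fun _ h => ⟨h.2, h.1⟩

theorem bddAbove_setOf_le_of_tendsto_atTop {f : ℝ → ℝ} (hf : Tendsto f atTop atTop) (c : ℝ) :
    BddAbove {r | f r ≤ c} := by
  obtain ⟨R, hR⟩ := eventually_atTop.mp (hf.eventually_gt_atTop c)
  exact ⟨R, fun r hr => not_lt.mp fun hRr => (hR r hRr.le).not_ge hr⟩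

/-- For `N > 2`, `α > 2`, `β > α - 2` and every `x ∈ ℝ^N`, the function
`f_x(r) = r^{2-N} ∫_{B(x,r)} Ṽ(y) dy` tends to `0` as `r → 0⁺` and to `+∞` as `r → +∞`,
where `Ṽ(y) = |y|^β / (1 + |y|^α)`. Consequently the set
`{r > 0 : f_x(r) ≤ 1}` is nonempty and bounded above, and its supremum is positive
(so the Agmon-type function `m(x)` satisfies `0 < m(x) < ∞`). -/
theorem agmon_fx_behaviour (N : ℕ) (hN : 2 < N) (α β : ℝ) (hα : 2 < α) (hβ : α - 2 < β)
    (x : EuclideanSpace ℝ (Fin N)) :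
    Tendsto (fun r : ℝ => r ^ (2 - (N : ℝ)) *
        ∫ y in Metric.ball x r, ‖y‖ ^ β / (1 + ‖y‖ ^ α)) (nhdsWithin 0 (Set.Ioi 0)) (nhds 0)
    ∧ Tendsto (fun r : ℝ => r ^ (2 - (N : ℝ)) *
        ∫ y in Metric.ball x r, ‖y‖ ^ β / (1 + ‖y‖ ^ α)) atTop atTop
    ∧ {r : ℝ | 0 < r ∧
        r ^ (2 - (N : ℝ)) * ∫ y in Metric.ball x r, ‖y‖ ^ β / (1 + ‖y‖ ^ α) ≤ 1}.Nonempty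
    ∧ BddAbove {r : ℝ | 0 < r ∧
        r ^ (2 - (N : ℝ)) * ∫ y in Metric.ball x r, ‖y‖ ^ β / (1 + ‖y‖ ^ α) ≤ 1}
    ∧ 0 < sSup {r : ℝ | 0 < r ∧
        r ^ (2 - (N : ℝ)) * ∫ y in Metric.ball x r, ‖y‖ ^ β / (1 + ‖y‖ ^ α) ≤ 1} := by
  have hα0 : 0 ≤ α := by linarith
  have hβ0 : 0 ≤ β := by linarith
  have hV := continuous_rpow_norm_div_one_add_rpow_norm (E := EuclideanSpace ℝ (Fin N)) hα0 hβ0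
  have : Nontrivial (EuclideanSpace ℝ (Fin N)) :=
    nontrivial_of_finrank_pos (R := ℝ) (by rw [finrank_euclideanSpace_fin]; omega)
  have hdim : (finrank ℝ (EuclideanSpace ℝ (Fin N)) : ℝ) = N := by
    rw [finrank_euclideanSpace_fin]
  have hzero := tendsto_rpow_mul_setIntegral_ball_nhdsGT_zero volume hV x (s := 2 - N)
    (by rw [hdim]; norm_num)
  have htop := tendsto_rpow_mul_setIntegral_ball_atTop volume (fun y => by positivity)
    hV.locallyIntegrable (by positivity : (0 : ℝ) < 4 ^ (-β) / 2) (R₀ := 1)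
    (fun r hr y hy => le_rpow_div_one_add_rpow hα0 hβ0 hr hy) (s := 2 - N)
    (by rw [hdim]; linarith) x
  have hne := nonempty_setOf_pos_and_le_of_tendsto_nhdsGT_zero hzero one_pos
  have hbdd := bddAbove_setOf_le_of_tendsto_atTop htop 1
  refine ⟨hzero, htop, hne, hbdd.mono fun _ => And.right, ?_⟩
  exact lt_csSup_of_lt (hbdd.mono fun _ => And.right) hne.some_mem hne.some_mem.1
end

section
/- Let N > 2 be an integer, α > 2 and α − 2 < β < α. For x ∈ ℝ^N let R(x) = sup{ r > 0 : r^{2−N}∫_{B(x,r)} Ṽ(y) dy ≤ 1 }. Then there exists a constant C = C(α, β, N) > 0 such that R(x) ≤ C (1 + |x|)^{(α−β)/2} for all x ∈ ℝ^N; equivalently, the Agmon-type function m(x) = 1/R(x) satisfies m(x) ≥ C' (1 + |x|)^{(β−α)/2} for some constant C' > 0. -/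
/-!
If `r` belongs to the set, the ball `B(x, r)` contains a ball of radius `r/4` on which
`‖x‖ + r/4 ≤ ‖y‖ ≤ ‖x‖ + r`; comparing the integral with the volume of that small ball gives
`τ r² (‖x‖ + r/4)^β ≤ 1 + (‖x‖ + r)^α` with `τ = |B(0, 1)| / 4^N`. For `r ≥ 1` and
`M = max (1 + ‖x‖) r` this yields `r ≤ K M^γ` with `γ = (α - β)/2 < 1`: if `M = r` it bounds `r`
by a constant, and if `M = 1 + ‖x‖` it is the claimed estimate.
-/

open Real MeasureTheory Metric Module

lemma exists_norm_sub_eq_and_norm_eq_add {E : Type*} [NormedAddCommGroup E] [NormedSpace ℝ E]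
    [Nontrivial E] (x : E) {c : ℝ} (hc : 0 ≤ c) : ∃ z : E, ‖z - x‖ = c ∧ ‖z‖ = ‖x‖ + c := by
  obtain ⟨u, hu, hxu⟩ : ∃ u : E, ‖u‖ = 1 ∧ ‖x‖ • u = x := by
    rcases eq_or_ne x 0 with rfl | hx
    · obtain ⟨u, hu⟩ := exists_norm_eq E zero_le_one
      exact ⟨u, hu, by simp⟩
    · exact ⟨‖x‖⁻¹ • x, norm_smul_inv_norm hx, smul_inv_smul₀ (norm_ne_zero_iff.2 hx) x⟩
  refine ⟨(‖x‖ + c) • u, ?_, ?_⟩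
  · rw [add_smul, hxu, add_sub_cancel_left, norm_smul, hu, mul_one, norm_of_nonneg hc]
  · rw [norm_smul, hu, mul_one, norm_of_nonneg (by positivity)]

lemma exists_ball_subset_ball_and_norm_ge {E : Type*} [NormedAddCommGroup E]
    [NormedSpace ℝ E] [Nontrivial E] (x : E) {r : ℝ} (hr : 0 ≤ r) :
    ∃ z : E, ball z (r / 4) ⊆ ball x r ∧ ∀ y ∈ ball z (r / 4), ‖x‖ + r / 4 ≤ ‖y‖ := by
  obtain ⟨z, hzx, hz⟩ := exists_norm_sub_eq_and_norm_eq_add x (c := r / 2) (by positivity)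
  refine ⟨z, fun y hy => ?_, fun y hy => ?_⟩ <;> rw [mem_ball, dist_eq_norm] at hy
  · rw [mem_ball, dist_eq_norm]
    linarith [norm_sub_le_norm_sub_add_norm_sub y z x]
  · linarith [norm_sub_norm_le z y, norm_sub_rev z y]

lemma rpow_div_one_add_rpow_le {a b t α β : ℝ} (hα : 0 ≤ α) (hβ : 0 ≤ β) (ha : 0 ≤ a)
    (hat : a ≤ t) (htb : t ≤ b) : a ^ β / (1 + b ^ α) ≤ t ^ β / (1 + t ^ α) := by
  have ht : 0 ≤ t := ha.trans hat
  gcongr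

section HaarMeasure

variable {E : Type*} [NormedAddCommGroup E] [NormedSpace ℝ E] [FiniteDimensional ℝ E]
  [MeasurableSpace E] [BorelSpace E] (μ : Measure E) [μ.IsAddHaarMeasure] {α β : ℝ}

lemma integrableOn_ball_rpow_div_one_add_rpow (hα : 0 ≤ α) (hβ : 0 ≤ β) (x : E) (r : ℝ) :
    IntegrableOn (fun y : E => ‖y‖ ^ β / (1 + ‖y‖ ^ α)) (ball x r) μ := by
  have hcont : Continuous fun y : E => ‖y‖ ^ β / (1 + ‖y‖ ^ α) :=
    (continuous_norm.rpow_const fun _ => Or.inr hβ).div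
      (continuous_const.add (continuous_norm.rpow_const fun _ => Or.inr hα))
      fun _ => by positivity
  exact (hcont.continuousOn.integrableOn_compact (isCompact_closedBall x r)).mono_set
    ball_subset_closedBall

variable [Nontrivial E]

lemma mul_measureReal_ball_le_setIntegral_ball (hα : 0 ≤ α) (hβ : 0 ≤ β) (x : E) {r : ℝ}
    (hr : 0 ≤ r) :
    (‖x‖ + r / 4) ^ β / (1 + (‖x‖ + r) ^ α) * ((r / 4) ^ finrank ℝ E * μ.real (ball 0 1)) ≤
      ∫ y in ball x r, ‖y‖ ^ β / (1 + ‖y‖ ^ α) ∂μ := by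
  obtain ⟨z, hzx, hz⟩ := exists_ball_subset_ball_and_norm_ge x hr
  have hvol : μ.real (ball z (r / 4)) = (r / 4) ^ finrank ℝ E * μ.real (ball 0 1) := by
    rw [measureReal_def, Measure.addHaar_ball μ z (by positivity), ENNReal.toReal_mul,
      ENNReal.toReal_ofReal (by positivity), measureReal_def]
  rw [← hvol]
  calc _ ≤ ∫ y in ball z (r / 4), ‖y‖ ^ β / (1 + ‖y‖ ^ α) ∂μ := by
        refine setIntegral_ge_of_const_le_real measurableSet_ball measure_ball_lt_top.ne
          (fun y hy => rpow_div_one_add_rpow_le hα hβ (by positivity) (hz y hy) ?_)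
          (integrableOn_ball_rpow_div_one_add_rpow μ hα hβ z _)
        have := mem_ball_iff_norm.1 (hzx hy)
        linarith [norm_le_norm_add_norm_sub' y x]
    _ ≤ _ := setIntegral_mono_set (integrableOn_ball_rpow_div_one_add_rpow μ hα hβ x r)
        (.of_forall fun y => by positivity) hzx.eventuallyLE

lemma mul_sq_mul_rpow_le_of_rpow_mul_setIntegral_le (hα : 0 ≤ α) (hβ : 0 ≤ β) (x : E) {r : ℝ}
    (hr : 0 < r)
    (h : r ^ (2 - (finrank ℝ E : ℝ)) * ∫ y in ball x r, ‖y‖ ^ β / (1 + ‖y‖ ^ α) ∂μ ≤ 1) :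
    μ.real (ball 0 1) / 4 ^ finrank ℝ E * r ^ 2 * (‖x‖ + r / 4) ^ β ≤ 1 + (‖x‖ + r) ^ α := by
  have hscale : r ^ (2 - (finrank ℝ E : ℝ)) * (r / 4) ^ finrank ℝ E = r ^ 2 / 4 ^ finrank ℝ E := by
    rw [rpow_sub hr, rpow_two, rpow_natCast, div_pow]
    field_simp
  rw [← div_le_one (by positivity)]
  calc _ = r ^ (2 - (finrank ℝ E : ℝ)) * ((‖x‖ + r / 4) ^ β / (1 + (‖x‖ + r) ^ α) *
        ((r / 4) ^ finrank ℝ E * μ.real (ball 0 1))) := by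
        linear_combination
          (-μ.real (ball 0 1) * (‖x‖ + r / 4) ^ β / (1 + (‖x‖ + r) ^ α)) * hscale
    _ ≤ r ^ (2 - (finrank ℝ E : ℝ)) * ∫ y in ball x r, ‖y‖ ^ β / (1 + ‖y‖ ^ α) ∂μ := by
        gcongr
        exact mul_measureReal_ball_le_setIntegral_ball μ hα hβ x hr.le
    _ ≤ 1 := h

end HaarMeasure

lemma le_mul_rpow_of_le_mul_max_rpow {K r s γ : ℝ} (hγ₀ : 0 ≤ γ) (hγ₁ : γ < 1) (hs : 1 ≤ s)
    (hr : 0 < r) (h : r ≤ K * max s r ^ γ) : r ≤ (K + K ^ (1 - γ)⁻¹) * s ^ γ := by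
  have hK : 0 < K := pos_of_mul_pos_left (hr.trans_le h) (by positivity)
  have hsγ : 1 ≤ s ^ γ := one_le_rpow hs hγ₀
  rcases le_total r s with hrs | hsr
  · rw [max_eq_left hrs] at h
    nlinarith [rpow_nonneg hK.le (1 - γ)⁻¹]
  · rw [max_eq_right hsr] at h
    have hrγ : r ^ (1 - γ) ≤ K := by
      rw [rpow_sub hr, rpow_one, div_le_iff₀ (by positivity)]
      exact h
    have hrK : r ≤ K ^ (1 - γ)⁻¹ := (le_rpow_inv_iff_of_pos hr.le hK.le (by linarith)).2 hrγ
    nlinarith [rpow_nonneg hK.le (1 - γ)⁻¹]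

lemma le_sqrt_mul_max_rpow_of_mul_sq_mul_rpow_le {τ t r α β : ℝ} (hτ : 0 < τ) (ht : 0 ≤ t)
    (hr : 1 ≤ r) (hα : 0 ≤ α) (hβ : 0 ≤ β)
    (h : τ * r ^ 2 * (t + r / 4) ^ β ≤ 1 + (t + r) ^ α) :
    r ≤ √(2 ^ (α + 1) * 4 ^ β / τ) * max (1 + t) r ^ ((α - β) / 2) := by
  set M := max (1 + t) r
  have hM : 1 ≤ M := le_max_of_le_left (by linarith)
  have hM₀ : 0 < M := by linarith
  have hlow : (M / 4) ^ β ≤ (t + r / 4) ^ β :=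
    rpow_le_rpow (by positivity) (by rw [div_le_iff₀ (by norm_num)]; apply max_le <;> linarith) hβ
  have hup : 1 + (t + r) ^ α ≤ 2 * (2 * M) ^ α := by
    have h₁ : (t + r) ^ α ≤ (2 * M) ^ α :=
      rpow_le_rpow (by linarith) (by linarith [le_max_left (1 + t) r, le_max_right (1 + t) r]) hα
    linarith [one_le_rpow (by linarith : (1 : ℝ) ≤ 2 * M) hα]
  have hsq : r ^ 2 ≤ 2 ^ (α + 1) * 4 ^ β / τ * (M ^ ((α - β) / 2)) ^ 2 := by
    have hτM : τ * r ^ 2 * (M / 4) ^ β ≤ 2 * (2 * M) ^ α :=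
      le_trans (by gcongr) (h.trans hup)
    rw [div_rpow hM₀.le (by norm_num), mul_rpow (by norm_num) hM₀.le,
      mul_div_assoc', div_le_iff₀ (by positivity)] at hτM
    rw [← rpow_mul_natCast hM₀.le, Nat.cast_ofNat, div_mul_cancel₀ _ two_ne_zero, rpow_sub hM₀,
      rpow_add_one two_ne_zero, div_mul_div_comm, le_div_iff₀ (by positivity)]
    linarith
  calc r = √(r ^ 2) := (sqrt_sq (by linarith)).symm
    _ ≤ √(2 ^ (α + 1) * 4 ^ β / τ * (M ^ ((α - β) / 2)) ^ 2) := sqrt_le_sqrt hsq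
    _ = _ := by rw [sqrt_mul (by positivity), sqrt_sq (by positivity)]

/-- For `N > 2`, `α > 2` and `α - 2 < β < α`, setting
`R(x) = sup { r > 0 : r^{2-N} ∫_{B(x,r)} Ṽ(y) dy ≤ 1 }` with `Ṽ(y) = |y|^β/(1+|y|^α)`,
there exists `C = C(α, β, N) > 0` such that `R(x) ≤ C (1 + |x|)^{(α-β)/2}` for all `x`,
i.e. the Agmon-type function `m(x) = 1/R(x)` satisfies
`m(x) ≥ C' (1+|x|)^{(β-α)/2}`. -/
theorem agmon_R_upper_bound_subcritical (N : ℕ) (hN : 2 < N) (α β : ℝ)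
    (hα : 2 < α) (hβ₁ : α - 2 < β) (hβ₂ : β < α) :
    ∃ C : ℝ, 0 < C ∧ ∀ x : EuclideanSpace ℝ (Fin N),
      sSup {r : ℝ | 0 < r ∧
          r ^ (2 - (N : ℝ)) * ∫ y in Metric.ball x r, ‖y‖ ^ β / (1 + ‖y‖ ^ α) ≤ 1}
        ≤ C * (1 + ‖x‖) ^ ((α - β) / 2) := by
  have : Nontrivial (EuclideanSpace ℝ (Fin N)) :=
    Module.nontrivial_of_finrank_pos (R := ℝ) (by rw [finrank_euclideanSpace_fin]; omega)
  let τ := volume.real (ball (0 : EuclideanSpace ℝ (Fin N)) 1) / 4 ^ N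
  have hτ : 0 < τ := div_pos (ENNReal.toReal_pos (measure_ball_pos volume 0 one_pos).ne'
    measure_ball_lt_top.ne) (by positivity)
  let K := √(2 ^ (α + 1) * 4 ^ β / τ)
  have hK : 0 ≤ K + K ^ (1 - (α - β) / 2)⁻¹ := by positivity
  refine ⟨1 + (K + K ^ (1 - (α - β) / 2)⁻¹), by positivity, fun x => ?_⟩
  have hs : 1 ≤ (1 + ‖x‖) ^ ((α - β) / 2) := one_le_rpow (by simp) (by linarith)
  refine Real.sSup_le (fun r ⟨hr, hI⟩ => ?_) (by positivity)
  rcases le_or_gt r 1 with hr₁ | hr₁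
  · calc r ≤ 1 * 1 := by linarith
      _ ≤ _ := by gcongr; linarith
  · have hα₀ : 0 ≤ α := by linarith
    have hβ₀ : 0 ≤ β := by linarith
    have key := mul_sq_mul_rpow_le_of_rpow_mul_setIntegral_le volume hα₀ hβ₀ x hr
      (by rwa [finrank_euclideanSpace_fin])
    rw [finrank_euclideanSpace_fin] at key
    calc r ≤ (K + K ^ (1 - (α - β) / 2)⁻¹) * (1 + ‖x‖) ^ ((α - β) / 2) :=
          le_mul_rpow_of_le_mul_max_rpow (by linarith) (by linarith) (by simp) hr
            (le_sqrt_mul_max_rpow_of_mul_sq_mul_rpow_le hτ (norm_nonneg x) hr₁.le hα₀ hβ₀ key)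
      _ ≤ _ := mul_le_mul_of_nonneg_right (by linarith) (by positivity)
end

section
/- Let N > 2 be an integer, α > 2 and β ≥ α. For x ∈ ℝ^N let R(x) = sup{ r > 0 : r^{2−N}∫_{B(x,r)} Ṽ(y) dy ≤ 1 }. Then there exists a constant C = C(α, β, N) > 0 such that R(x) ≤ C (1 + |x|)^{(α−β)/2} for all x ∈ ℝ^N; equivalently, the Agmon-type function m(x) = 1/R(x) satisfies m(x) ≥ C' (1 + |x|)^{(β−α)/2} for some constant C' > 0. -/
/-!
Let `r > 0` satisfy `r^(2-N) ∫_{B(x,r)} Ṽ ≤ 1`. If `‖x‖ + r/4 ≥ 1`, the ball `B(x, r)` contains a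
ball of radius `r/4` on which `‖y‖ ≥ ‖x‖ + r/4 ≥ 1`, hence `Ṽ(y) ≥ (‖x‖ + r/4)^(β-α)/2`.
Integrating over that ball gives `r² (‖x‖ + r/4)^(β-α) ≲ 1`, and since
`1 + ‖x‖ ≤ 2 (‖x‖ + r/4)` this is `r ≲ (1 + ‖x‖)^((α-β)/2)`. If `‖x‖ + r/4 < 1`, then `r` and
`1 + ‖x‖` are both bounded.
-/

open Real MeasureTheory Metric Module

section Geometry

variable {E : Type*} [NormedAddCommGroup E] [NormedSpace ℝ E] [Nontrivial E]

theorem exists_sameRay_norm_eq (x : E) {c : ℝ} (hc : 0 ≤ c) :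
    ∃ v : E, SameRay ℝ x v ∧ ‖v‖ = c := by
  rcases eq_or_ne x 0 with rfl | hx
  · obtain ⟨v, hv⟩ := exists_norm_eq E hc
    exact ⟨v, SameRay.zero_left v, hv⟩
  · refine ⟨(c / ‖x‖) • x, SameRay.sameRay_nonneg_smul_right x (by positivity), ?_⟩
    rw [norm_smul, norm_div, norm_norm, Real.norm_of_nonneg hc,
      div_mul_cancel₀ c (norm_ne_zero_iff.mpr hx)]

theorem exists_ball_subset_ball_forall_norm_ge (x : E) {r : ℝ} (hr : 0 < r) :
    ∃ z : E, ball z (r / 4) ⊆ ball x r ∧ ∀ y ∈ ball z (r / 4), ‖x‖ + r / 4 ≤ ‖y‖ := by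
  obtain ⟨v, hxv, hv⟩ := exists_sameRay_norm_eq x (half_pos hr).le
  have hz : ‖x + v‖ = ‖x‖ + r / 2 := by rw [hxv.norm_add, hv]
  refine ⟨x + v, fun y hy => ?_, fun y hy => ?_⟩
  · rw [mem_ball] at hy ⊢
    calc dist y x ≤ dist y (x + v) + dist (x + v) x := dist_triangle _ _ _
      _ < r / 4 + r / 2 := by rw [dist_self_add_left, hv]; gcongr
      _ < r := by linarith
  · rw [mem_ball, dist_eq_norm] at hy
    linarith [norm_sub_norm_le (x + v) y, norm_sub_rev y (x + v)]

end Geometry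

theorem mul_measureReal_le_setIntegral_of_subset {X : Type*} [MeasurableSpace X] {μ : Measure X}
    {f : X → ℝ} {s t : Set X} {c : ℝ} (hs : MeasurableSet s) (hμs : μ s ≠ ⊤) (ht : MeasurableSet t)
    (hst : s ⊆ t) (hf : IntegrableOn f t μ) (hf0 : ∀ y ∈ t, 0 ≤ f y) (hc : ∀ y ∈ s, c ≤ f y) :
    c * μ.real s ≤ ∫ y in t, f y ∂μ :=
  calc c * μ.real s ≤ ∫ y in s, f y ∂μ :=
        setIntegral_ge_of_const_le_real hs hμs hc (hf.mono_set hst)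
    _ ≤ ∫ y in t, f y ∂μ :=
      setIntegral_mono_set hf (ae_restrict_of_forall_mem ht hf0) hst.eventuallyLE

theorem half_rpow_sub_le_rpow_div_one_add_rpow {α β s t : ℝ} (hα : 0 ≤ α) (hαβ : α ≤ β)
    (hs : 1 ≤ s) (hst : s ≤ t) : s ^ (β - α) / 2 ≤ t ^ β / (1 + t ^ α) := by
  have ht : 0 < t := by linarith
  have htα : 1 ≤ t ^ α := one_le_rpow (by linarith) hα
  calc s ^ (β - α) / 2 ≤ t ^ (β - α) / 2 := by gcongr
    _ = t ^ β / (2 * t ^ α) := by rw [rpow_sub ht]; field_simp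
    _ ≤ t ^ β / (1 + t ^ α) := by gcongr; linarith

theorem sq_mul_one_add_rpow_le {γ K X r : ℝ} (hγ : 0 ≤ γ) (hX : 0 ≤ X) (hr : 0 ≤ r)
    (h : 1 ≤ X + r / 4 → r ^ 2 * (X + r / 4) ^ γ ≤ K) :
    r ^ 2 * (1 + X) ^ γ ≤ 2 ^ γ * max K 16 := by
  rcases le_or_gt 1 (X + r / 4) with hs | hs
  · calc r ^ 2 * (1 + X) ^ γ ≤ r ^ 2 * (2 * (X + r / 4)) ^ γ := by gcongr; linarith
      _ = 2 ^ γ * (r ^ 2 * (X + r / 4) ^ γ) := by rw [mul_rpow (by norm_num) (by linarith)]; ring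
      _ ≤ 2 ^ γ * max K 16 := by gcongr; exact (h hs).trans (le_max_left K 16)
  · calc r ^ 2 * (1 + X) ^ γ ≤ 16 * 2 ^ γ := by
          gcongr
          · nlinarith
          · linarith
      _ ≤ 2 ^ γ * max K 16 := by rw [mul_comm]; gcongr; exact le_max_right K 16

theorem le_sqrt_mul_rpow_neg_of_sq_mul_rpow_le {γ M a r : ℝ} (ha : 0 < a) (hr : 0 ≤ r)
    (h : r ^ 2 * a ^ γ ≤ M) : r ≤ √M * a ^ (-(γ / 2)) := by
  have hM : 0 ≤ M := le_trans (by positivity) h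
  have hsq : (a ^ (-(γ / 2))) ^ 2 = (a ^ γ)⁻¹ := by
    rw [← rpow_mul_natCast ha.le, ← rpow_neg ha.le]
    ring_nf
  rw [← pow_le_pow_iff_left₀ hr (by positivity) two_ne_zero, mul_pow, sq_sqrt hM, hsq,
    ← div_eq_mul_inv, le_div_iff₀ (rpow_pos_of_pos ha γ)]
  exact h

theorem rpow_two_sub_mul_div_pow {r : ℝ} (hr : 0 < r) (c : ℝ) (n : ℕ) :
    r ^ (2 - (n : ℝ)) * (r / c) ^ n = r ^ 2 / c ^ n := by
  rw [div_pow, ← mul_div_assoc, ← rpow_natCast r n, ← rpow_add hr, sub_add_cancel, rpow_two]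

section AddHaar

variable {E : Type*} [NormedAddCommGroup E] [NormedSpace ℝ E] [Nontrivial E] [FiniteDimensional ℝ E]
  [MeasurableSpace E] [BorelSpace E] (μ : Measure E) [μ.IsAddHaarMeasure]

theorem mul_pow_le_setIntegral_ball {f : E → ℝ} {x : E} {r c : ℝ} (hr : 0 < r)
    (hf : IntegrableOn f (ball x r) μ) (hf0 : ∀ y ∈ ball x r, 0 ≤ f y)
    (hc : ∀ y, ‖x‖ + r / 4 ≤ ‖y‖ → c ≤ f y) :
    c * ((r / 4) ^ finrank ℝ E * μ.real (ball 0 1)) ≤ ∫ y in ball x r, f y ∂μ := by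
  obtain ⟨z, hsub, hnorm⟩ := exists_ball_subset_ball_forall_norm_ge x hr
  have hvol : μ.real (ball z (r / 4)) = (r / 4) ^ finrank ℝ E * μ.real (ball 0 1) := by
    rw [measureReal_def, Measure.addHaar_ball μ z (by positivity), ENNReal.toReal_mul,
      ENNReal.toReal_ofReal (by positivity), ← measureReal_def]
  rw [← hvol]
  exact mul_measureReal_le_setIntegral_of_subset measurableSet_ball measure_ball_lt_top.ne
    measurableSet_ball hsub hf hf0 fun y hy => hc y (hnorm y hy)

theorem sq_mul_rpow_le_of_rpow_two_sub_mul_setIntegral_le {α β r : ℝ} {x : E} (hα : 0 ≤ α)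
    (hαβ : α ≤ β) (hr : 0 < r) (hs : 1 ≤ ‖x‖ + r / 4)
    (hle : r ^ (2 - (finrank ℝ E : ℝ)) * ∫ y in ball x r, ‖y‖ ^ β / (1 + ‖y‖ ^ α) ∂μ ≤ 1) :
    r ^ 2 * (‖x‖ + r / 4) ^ (β - α) ≤ 2 * 4 ^ finrank ℝ E / μ.real (ball 0 1) := by
  set d := finrank ℝ E
  set κ := μ.real (ball (0 : E) 1)
  have hκ : 0 < κ := ENNReal.toReal_pos (measure_ball_pos _ _ one_pos).ne' measure_ball_lt_top.ne
  have hV : Continuous fun y : E => ‖y‖ ^ β / (1 + ‖y‖ ^ α) :=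
    .div (continuous_norm.rpow_const fun _ => .inr (by linarith))
      (continuous_const.add (continuous_norm.rpow_const fun _ => .inr hα)) fun y => by positivity
  have hI := mul_pow_le_setIntegral_ball μ hr
    (hV.continuousOn.integrableOn_compact (isCompact_closedBall x r) |>.mono_set
      ball_subset_closedBall)
    (fun y _ => by positivity) fun y hy => half_rpow_sub_le_rpow_div_one_add_rpow hα hαβ hs hy
  have hdensity : (‖x‖ + r / 4) ^ (β - α) / 2 * κ * (r ^ 2 / 4 ^ d) ≤ 1 :=
    calc (‖x‖ + r / 4) ^ (β - α) / 2 * κ * (r ^ 2 / 4 ^ d)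
        = r ^ (2 - (d : ℝ)) * ((‖x‖ + r / 4) ^ (β - α) / 2 * ((r / 4) ^ d * κ)) := by
          rw [← rpow_two_sub_mul_div_pow hr]; ring
      _ ≤ r ^ (2 - (d : ℝ)) * ∫ y in ball x r, ‖y‖ ^ β / (1 + ‖y‖ ^ α) ∂μ := by gcongr
      _ ≤ 1 := hle
  rw [le_div_iff₀ hκ]
  calc r ^ 2 * (‖x‖ + r / 4) ^ (β - α) * κ
      = (‖x‖ + r / 4) ^ (β - α) / 2 * κ * (r ^ 2 / 4 ^ d) * (2 * 4 ^ d) := by field_simp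
    _ ≤ 2 * 4 ^ d := mul_le_of_le_one_left (by positivity) hdensity

end AddHaar

/-- For `N > 2`, `α > 2` and `β ≥ α`, setting
`R(x) = sup { r > 0 : r^{2-N} ∫_{B(x,r)} Ṽ(y) dy ≤ 1 }` with `Ṽ(y) = |y|^β/(1+|y|^α)`,
there exists `C = C(α, β, N) > 0` such that `R(x) ≤ C (1 + |x|)^{(α-β)/2}` for all `x`,
i.e. the Agmon-type function `m(x) = 1/R(x)` satisfies
`m(x) ≥ C' (1+|x|)^{(β-α)/2}`. -/
theorem agmon_R_upper_bound_supercritical (N : ℕ) (hN : 2 < N) (α β : ℝ)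
    (hα : 2 < α) (hβ : α ≤ β) :
    ∃ C : ℝ, 0 < C ∧ ∀ x : EuclideanSpace ℝ (Fin N),
      sSup {r : ℝ | 0 < r ∧
          r ^ (2 - (N : ℝ)) * ∫ y in Metric.ball x r, ‖y‖ ^ β / (1 + ‖y‖ ^ α) ≤ 1}
        ≤ C * (1 + ‖x‖) ^ ((α - β) / 2) := by
  have : Nonempty (Fin N) := ⟨⟨0, by omega⟩⟩
  set K := 2 * 4 ^ N / volume.real (ball (0 : EuclideanSpace ℝ (Fin N)) 1)
  refine ⟨√(2 ^ (β - α) * max K 16), sqrt_pos.mpr (by positivity), fun x => ?_⟩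
  refine Real.sSup_le (fun r ⟨hr, hle⟩ => ?_) (by positivity)
  rw [show (α - β) / 2 = -((β - α) / 2) by ring]
  refine le_sqrt_mul_rpow_neg_of_sq_mul_rpow_le (by positivity) hr.le
    (sq_mul_one_add_rpow_le (by linarith) (norm_nonneg x) hr.le fun hs => ?_)
  simpa only [finrank_euclideanSpace_fin] using
    sq_mul_rpow_le_of_rpow_two_sub_mul_setIntegral_le volume (by linarith) hβ hr hs
      (by rwa [finrank_euclideanSpace_fin])
end

section
/- Let N > 2 be an integer, α > 2, β > α − 2, 0 ≤ γ ≤ β, and let k > 0 satisfy k > β − N + 2 and k(β − α + 2)/2 > β + 2. Then there exists a constant C > 0 such that: (a) for every x ∈ ℝ^N, ∫_{{y : |x−y| > 1+|y|}} |x|^γ (1 + |x−y|^k (1+|y|)^{k(β−α)/2})^{−1} |x−y|^{2−N} dy ≤ C; and (b) for every y ∈ ℝ^N, ∫_{{x : |x−y| > 1+|y|}} |x|^γ (1 + |x−y|^k (1+|x|)^{k(β−α)/2})^{−1} |x−y|^{2−N} dx ≤ C. -/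
open Real MeasureTheory

/-!
On `E₂` write `r = |x - y|` and `u = 1 + |y|` for the integral in `y`, `u = 1 + |x|` for the
integral in `x`. In both cases `1 ≤ r`, `|x| ≤ 2r` and `u ≤ 2r`, so the kernel is at most
`2^(N+k-2) (2r)^(-a) u^(-m)` with `m = k(β-α)/2` and `a = N + k - 2 - γ ≥ 0`. Since `u ≤ 2r`,
a product `(2r)^(-a) u^(-m)` is dominated by `(1+r)^(-c) + u^(-c)` with `c = a + m`, and
`c > N` is exactly the condition `k(β-α+2)/2 > γ + 2`. Both terms are integrable over all
of `ℝ^N`, uniformly in the other variable by translation invariance.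
-/

namespace Real

lemma rpow_neg_mul_rpow_neg_le_add {R u a b : ℝ} (hu : 0 < u) (huR : u ≤ R) (ha : 0 ≤ a) :
    R ^ (-a) * u ^ (-b) ≤ R ^ (-(a + b)) + u ^ (-(a + b)) := by
  have hR : 0 < R := hu.trans_le huR
  rcases le_total 0 b with hb | hb
  · calc R ^ (-a) * u ^ (-b) ≤ u ^ (-a) * u ^ (-b) :=
          mul_le_mul_of_nonneg_right (rpow_le_rpow_of_nonpos hu huR (neg_nonpos.mpr ha))
            (by positivity)
      _ = u ^ (-(a + b)) := by rw [← rpow_add hu, neg_add]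
      _ ≤ R ^ (-(a + b)) + u ^ (-(a + b)) := le_add_of_nonneg_left (by positivity)
  · calc R ^ (-a) * u ^ (-b) ≤ R ^ (-a) * R ^ (-b) :=
          mul_le_mul_of_nonneg_left (rpow_le_rpow hu.le huR (neg_nonneg.mpr hb)) (by positivity)
      _ = R ^ (-(a + b)) := by rw [← rpow_add hR, neg_add]
      _ ≤ R ^ (-(a + b)) + u ^ (-(a + b)) := le_add_of_nonneg_right (by positivity)

end Real

lemma kernel_le_of_le_two_mul {n γ k m t r u : ℝ} (hγ : 0 ≤ γ) (ha : 0 ≤ n + k - 2 - γ)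
    (hc : 0 ≤ n + k - 2 - γ + m) (hr : 1 ≤ r) (ht0 : 0 ≤ t) (ht : t ≤ 2 * r) (hu : 0 < u)
    (hur : u ≤ 2 * r) :
    t ^ γ * (1 + r ^ k * u ^ m)⁻¹ * r ^ (2 - n) ≤
      2 ^ (n + k - 2) * ((1 + r) ^ (-(n + k - 2 - γ + m)) + u ^ (-(n + k - 2 - γ + m))) := by
  have hr0 : 0 < r := by linarith
  have hinv : (1 + r ^ k * u ^ m)⁻¹ ≤ r ^ (-k) * u ^ (-m) := by
    rw [rpow_neg hr0.le, rpow_neg hu.le, ← mul_inv]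
    exact inv_anti₀ (by positivity) (by linarith)
  have hsplit : (2 * r) ^ γ * r ^ (-k) * r ^ (2 - n) =
      2 ^ (n + k - 2) * (2 * r) ^ (-(n + k - 2 - γ)) := by
    simp only [rpow_def_of_pos hr0, rpow_def_of_pos (by positivity : (0 : ℝ) < 2 * r),
      rpow_def_of_pos (by norm_num : (0 : ℝ) < 2), ← exp_add, log_mul two_ne_zero hr0.ne']
    congr 1
    ring
  calc t ^ γ * (1 + r ^ k * u ^ m)⁻¹ * r ^ (2 - n)
      ≤ (2 * r) ^ γ * (r ^ (-k) * u ^ (-m)) * r ^ (2 - n) := by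
        gcongr
    _ = ((2 * r) ^ γ * r ^ (-k) * r ^ (2 - n)) * u ^ (-m) := by ring
    _ = 2 ^ (n + k - 2) * ((2 * r) ^ (-(n + k - 2 - γ)) * u ^ (-m)) := by rw [hsplit]; ring
    _ ≤ 2 ^ (n + k - 2) * ((2 * r) ^ (-(n + k - 2 - γ + m)) + u ^ (-(n + k - 2 - γ + m))) := by
        gcongr
        exact rpow_neg_mul_rpow_neg_le_add hu hur ha
    _ ≤ 2 ^ (n + k - 2) * ((1 + r) ^ (-(n + k - 2 - γ + m)) + u ^ (-(n + k - 2 - γ + m))) := by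
        gcongr 2 ^ _ * (?_ + _)
        exact rpow_le_rpow_of_nonpos (by positivity) (by linarith) (neg_nonpos.mpr hc)

lemma one_add_norm_le_two_mul_norm_sub {E : Type*} [SeminormedAddCommGroup E] {x y : E}
    (h : 1 + ‖y‖ < ‖x - y‖) : 1 + ‖x‖ ≤ 2 * ‖x - y‖ := by
  have := norm_le_norm_sub_add x y
  linarith

lemma setIntegral_le_two_mul_integral_of_le_add_comp_sub {E : Type*} [MeasurableSpace E]
    [AddGroup E] [MeasurableAdd E] {μ : Measure E} [μ.IsAddRightInvariant] {f g : E → ℝ}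
    {s : Set E} (a : E) (hs : MeasurableSet s) (hg : Integrable g μ) (hg0 : 0 ≤ g) (hf0 : 0 ≤ f)
    (hf : ∀ z ∈ s, f z ≤ g (z - a) + g z) :
    ∫ z in s, f z ∂μ ≤ 2 * ∫ z, g z ∂μ := by
  have hbound : Integrable (fun z => g (z - a) + g z) μ := (hg.comp_sub_right a).add hg
  calc ∫ z in s, f z ∂μ ≤ ∫ z in s, g (z - a) + g z ∂μ :=
        integral_mono_of_nonneg (ae_of_all _ hf0) hbound.restrict
          ((ae_restrict_iff' hs).mpr (ae_of_all _ hf))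
    _ ≤ ∫ z, g (z - a) + g z ∂μ :=
        setIntegral_le_integral hbound (ae_of_all _ fun z => add_nonneg (hg0 _) (hg0 _))
    _ = 2 * ∫ z, g z ∂μ := by
        rw [integral_add (hg.comp_sub_right a) hg, integral_sub_right_eq_self]; ring

theorem kernel_integral_bounds_E2_general (N : ℕ) (α β γ k : ℝ)
    (hγ0 : 0 ≤ γ) (hγβ : γ ≤ β)
    (hk1 : β - N + 2 < k) (hk2 : β + 2 < k * (β - α + 2) / 2) :
    ∃ C : ℝ, 0 < C ∧
      (∀ x : EuclideanSpace ℝ (Fin N),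
        (∫ y in {y : EuclideanSpace ℝ (Fin N) | 1 + ‖y‖ < ‖x - y‖},
          ‖x‖ ^ γ * (1 + ‖x - y‖ ^ k * (1 + ‖y‖) ^ (k * (β - α) / 2))⁻¹ *
            ‖x - y‖ ^ (2 - (N : ℝ))) ≤ C)
    ∧ (∀ y : EuclideanSpace ℝ (Fin N),
        (∫ x in {x : EuclideanSpace ℝ (Fin N) | 1 + ‖y‖ < ‖x - y‖},
          ‖x‖ ^ γ * (1 + ‖x - y‖ ^ k * (1 + ‖x‖) ^ (k * (β - α) / 2))⁻¹ *
            ‖x - y‖ ^ (2 - (N : ℝ))) ≤ C) := by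
  set m := k * (β - α) / 2
  set c := (N : ℝ) + k - 2 - γ + m
  have ha : 0 ≤ (N : ℝ) + k - 2 - γ := by linarith
  have hc : (N : ℝ) < c := by simp only [c, m]; linarith
  set g : EuclideanSpace ℝ (Fin N) → ℝ := fun z => 2 ^ ((N : ℝ) + k - 2) * (1 + ‖z‖) ^ (-c)
  have hg : Integrable g := (integrable_one_add_norm (by simpa using hc)).const_mul _
  have hg0 : 0 ≤ g := fun z => by positivity
  have hC : 2 * ∫ z, g z ≤ 2 * (∫ z, g z) + 1 := le_add_of_nonneg_right zero_le_one
  refine ⟨2 * (∫ z, g z) + 1, by positivity, fun x => ?_, fun y => ?_⟩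
  · refine le_trans (setIntegral_le_two_mul_integral_of_le_add_comp_sub x
      (measurableSet_lt (by fun_prop) (by fun_prop)) hg hg0 (fun y => by positivity) ?_) hC
    intro y (hy : 1 + ‖y‖ < ‖x - y‖)
    have hxy := one_add_norm_le_two_mul_norm_sub hy
    rw [← mul_add, norm_sub_rev y x]
    exact kernel_le_of_le_two_mul hγ0 ha (by linarith) (by linarith [norm_nonneg y])
      (norm_nonneg x) (by linarith) (by positivity) (by linarith [norm_nonneg (x - y)])
  · refine le_trans (setIntegral_le_two_mul_integral_of_le_add_comp_sub y
      (measurableSet_lt (by fun_prop) (by fun_prop)) hg hg0 (fun x => by positivity) ?_) hC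
    intro x (hx : 1 + ‖y‖ < ‖x - y‖)
    have hxy := one_add_norm_le_two_mul_norm_sub hx
    rw [← mul_add]
    exact kernel_le_of_le_two_mul hγ0 ha (by linarith) (by linarith [norm_nonneg y])
      (norm_nonneg x) (by linarith) (by positivity) hxy

/-- Let `N > 2`, `α > 2`, `β > α - 2`, `0 ≤ γ ≤ β` and `k > 0` with
`k > β - N + 2` and `k(β - α + 2)/2 > β + 2`. Then there is `C > 0` such that the
kernel bound `|x|^γ (1 + |x-y|^k (1+|y|)^{k(β-α)/2})^{-1} |x-y|^{2-N}` integrates, over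
the region `E₂ = {|x-y| > 1+|y|}`, to at most `C`, both in the `y` variable (for fixed
`x`) and in the `x` variable (for fixed `y`, with `(1+|y|)` replaced by `(1+|x|)` in the
kernel). -/
theorem kernel_integral_bounds_E2 (N : ℕ) (hN : 2 < N) (α β γ k : ℝ)
    (hα : 2 < α) (hβ : α - 2 < β) (hγ0 : 0 ≤ γ) (hγβ : γ ≤ β) (hk : 0 < k)
    (hk1 : β - N + 2 < k) (hk2 : β + 2 < k * (β - α + 2) / 2) :
    ∃ C : ℝ, 0 < C ∧
      (∀ x : EuclideanSpace ℝ (Fin N),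
        (∫ y in {y : EuclideanSpace ℝ (Fin N) | 1 + ‖y‖ < ‖x - y‖},
          ‖x‖ ^ γ * (1 + ‖x - y‖ ^ k * (1 + ‖y‖) ^ (k * (β - α) / 2))⁻¹ *
            ‖x - y‖ ^ (2 - (N : ℝ))) ≤ C)
    ∧ (∀ y : EuclideanSpace ℝ (Fin N),
        (∫ x in {x : EuclideanSpace ℝ (Fin N) | 1 + ‖y‖ < ‖x - y‖},
          ‖x‖ ^ γ * (1 + ‖x - y‖ ^ k * (1 + ‖x‖) ^ (k * (β - α) / 2))⁻¹ *
            ‖x - y‖ ^ (2 - (N : ℝ))) ≤ C) :=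
  kernel_integral_bounds_E2_general N α β γ k hγ0 hγβ hk1 hk2
end

section
/- For every integer N ≥ 1 and every 0 ≤ k < 1/2 there exists a natural number ζ = ζ(N,k) with the following property: for every Lipschitz continuous function ρ : ℝ^N → (0,∞) with Lipschitz constant k (i.e. |ρ(x) − ρ(y)| ≤ k|x − y| for all x, y), there exists a countable set of points (x_n)_{n∈ℕ} in ℝ^N such that the balls B(x_n, ρ(x_n)) cover ℝ^N, and every point of ℝ^N belongs to at most ζ of the double balls B(x_n, 2ρ(x_n)). -/
open Metric MeasureTheory Set Module

/-!
Take, by Zorn's lemma, a maximal set `M` of centres such that `ρ x ≤ 2 * dist x y` for all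
distinct `x, y ∈ M`. Since the Lipschitz constant is at most `1`, a point outside every ball
`B(x, ρ x)` could be added to `M`, so these balls cover. If `z ∈ B(x, 2ρ x)`, then
`k < 1/2` gives `ρ z / (1 + 2k) ≤ ρ x ≤ ρ z / (1 - 2k)`, so the pairwise disjoint balls
`B(x, ρ x / 4)` have radius at least `ρ z / (4(1 + 2k))` and lie in `B(z, 9ρ z / (4(1 - 2k)))`;
comparing Haar measures bounds their number by `(9(1 + 2k) / (1 - 2k))^N`. The same disjoint
balls make `M` countable, and covering an unbounded space makes it infinite, so it is the range
of an injective sequence.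
-/

section Separation

variable {X : Type*} [PseudoMetricSpace X] {ρ : X → ℝ} {k : ℝ}

def RadiusSeparated (ρ : X → ℝ) (S : Set X) : Prop :=
  S.Pairwise fun x y => ρ x ≤ 2 * dist x y

theorem exists_maximal_radiusSeparated (ρ : X → ℝ) : ∃ M, Maximal (RadiusSeparated ρ) M :=
  zorn_subset _ fun C hC hchain =>
    ⟨⋃₀ C, (pairwise_sUnion hchain.directedOn).2 hC, fun _ => subset_sUnion_of_mem⟩

namespace RadiusSeparated

variable {S : Set X}

theorem mono {T : Set X} (hS : RadiusSeparated ρ S) (hT : T ⊆ S) : RadiusSeparated ρ T :=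
  Set.Pairwise.mono hT hS

theorem pairwiseDisjoint_ball (hS : RadiusSeparated ρ S) :
    S.PairwiseDisjoint fun x => ball x (ρ x / 4) := fun x hx y hy hxy =>
  ball_disjoint_ball (by linarith [hS hx hy hxy, hS hy hx hxy.symm, dist_comm x y])

theorem countable [TopologicalSpace.SeparableSpace X] (hρ : ∀ x, 0 < ρ x)
    (hS : RadiusSeparated ρ S) : S.Countable :=
  hS.pairwiseDisjoint_ball.countable_of_isOpen (fun _ _ => isOpen_ball)
    fun x _ => nonempty_ball.2 (by linarith [hρ x])

end RadiusSeparated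

theorem Maximal.exists_mem_ball_of_radiusSeparated {M : Set X} (hρ : ∀ x, 0 < ρ x)
    (hlip : ∀ x y, |ρ x - ρ y| ≤ k * dist x y) (hk : k ≤ 1)
    (hM : Maximal (RadiusSeparated ρ) M) (z : X) : ∃ x ∈ M, z ∈ ball x (ρ x) := by
  by_contra! hfar
  have hins : RadiusSeparated ρ (insert z M) := by
    refine pairwise_insert.2 ⟨hM.prop, fun y hy _ => ⟨?_, ?_⟩⟩
    all_goals
      have hρy : ρ y ≤ dist z y := not_lt.1 (hfar y hy)
      have hkd : k * dist z y ≤ dist z y := mul_le_of_le_one_left dist_nonneg hk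
      linarith [le_of_abs_le (hlip z y), dist_comm z y, dist_nonneg (x := z) (y := y)]
  exact hfar z (hM.mem_of_prop_insert hins) (mem_ball_self (hρ z))

theorem abs_sub_le_of_dist_lt_two_mul (hlip : ∀ x y, |ρ x - ρ y| ≤ k * dist x y) (hk : 0 ≤ k)
    {x z : X} (h : dist z x < 2 * ρ x) : |ρ z - ρ x| ≤ 2 * k * ρ x :=
  calc |ρ z - ρ x| ≤ k * dist z x := hlip z x
    _ ≤ k * (2 * ρ x) := mul_le_mul_of_nonneg_left h.le hk
    _ = 2 * k * ρ x := by ring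

end Separation

theorem Set.Countable.exists_injective_range_eq {α : Type*} {s : Set α} (hc : s.Countable)
    (hs : s.Infinite) : ∃ f : ℕ → α, f.Injective ∧ range f = s := by
  have := hc.to_subtype
  have := hs.to_subtype
  obtain ⟨e⟩ : Nonempty (ℕ ≃ s) := nonempty_equiv_of_countable
  exact ⟨(↑) ∘ e, Subtype.val_injective.comp e.injective, by
    rw [range_comp, e.range_eq_univ, image_univ, Subtype.range_coe]⟩

theorem Set.PairwiseDisjoint.encard_mul_le_measure {α ι : Type*} [MeasurableSpace α]
    (μ : Measure α) {T : Set ι} {U : ι → Set α} {S : Set α} {c : ENNReal}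
    (hdisj : T.PairwiseDisjoint U) (hU : ∀ i ∈ T, MeasurableSet (U i))
    (hc : ∀ i ∈ T, c ≤ μ (U i)) (hsub : ∀ i ∈ T, U i ⊆ S) : T.encard * c ≤ μ S :=
  calc T.encard * c = ∑' _ : T, c := (ENNReal.tsum_set_const T c).symm
    _ ≤ ∑' i : T, μ (U i) := ENNReal.tsum_le_tsum fun i => hc i i.2
    _ ≤ μ (⋃ i : T, U i) :=
      tsum_meas_le_meas_iUnion_of_disjoint μ (fun i => hU i i.2) (hdisj.subtype _ _)
    _ ≤ μ S := measure_mono (iUnion_subset fun i => hsub i i.2)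

section NormedSpace

variable {E : Type*} [NormedAddCommGroup E] [NormedSpace ℝ E]

theorem infinite_of_forall_exists_mem_ball [Nontrivial E] {M : Set E} {r : E → ℝ}
    (h : ∀ z, ∃ x ∈ M, z ∈ ball x (r x)) : M.Infinite := fun hfin =>
  NormedSpace.unbounded_univ ℝ E <|
    (((Bornology.isBounded_biUnion hfin).2 fun _ _ => isBounded_ball).subset fun z _ => by
      obtain ⟨x, hx, hz⟩ := h z
      exact mem_biUnion hx hz)

theorem encard_le_of_pairwiseDisjoint_ball [FiniteDimensional ℝ E] {T : Set E} {r : E → ℝ}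
    {z : E} {a R : ℝ} (ha : 0 < a) (hra : ∀ x ∈ T, a ≤ r x)
    (hsub : ∀ x ∈ T, ball x (r x) ⊆ ball z R) (hdisj : T.PairwiseDisjoint fun x => ball x (r x)) :
    T.encard ≤ ⌈(R / a) ^ finrank ℝ E⌉₊ := by
  obtain rfl | ⟨x, hx⟩ := T.eq_empty_or_nonempty
  · simp
  have hR : 0 < R :=
    dist_nonneg.trans_lt (hsub x hx (mem_ball_self (ha.trans_le (hra x hx))))
  borelize E
  let μ : Measure E := Measure.addHaar
  have hμ0 : μ (ball 0 1) ≠ 0 := (measure_ball_pos μ 0 one_pos).ne'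
  have hμtop : μ (ball 0 1) ≠ ⊤ := measure_ball_lt_top.ne
  have hvol : T.encard * (ENNReal.ofReal (a ^ finrank ℝ E) * μ (ball 0 1))
      ≤ ENNReal.ofReal (R ^ finrank ℝ E) * μ (ball 0 1) := by
    rw [← Measure.addHaar_ball_of_pos μ z hR]
    refine hdisj.encard_mul_le_measure μ (fun _ _ => measurableSet_ball) (fun y hy => ?_) hsub
    rw [← Measure.addHaar_ball_of_pos μ y ha]
    exact measure_mono (ball_subset_ball (hra y hy))
  rw [← mul_assoc, ENNReal.mul_le_mul_iff_left hμ0 hμtop,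
    ← ENNReal.le_div_iff_mul_le (Or.inl (by simp [ha])) (Or.inl ENNReal.ofReal_ne_top),
    ← ENNReal.ofReal_div_of_pos (by positivity), ← div_pow] at hvol
  have hceil : ENNReal.ofReal ((R / a) ^ finrank ℝ E) ≤ (⌈(R / a) ^ finrank ℝ E⌉₊ : ENNReal) :=
    (ENNReal.ofReal_le_ofReal (Nat.le_ceil _)).trans_eq (ENNReal.ofReal_natCast _)
  exact ENat.toENNReal_le.1 (hvol.trans hceil)

theorem RadiusSeparated.encard_setOf_mem_ball_two_mul_le [FiniteDimensional ℝ E] {ρ : E → ℝ}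
    {k : ℝ} {M : Set E} (hρ : ∀ x, 0 < ρ x) (hlip : ∀ x y, |ρ x - ρ y| ≤ k * dist x y)
    (hk0 : 0 ≤ k) (hk : k < 1 / 2) (hM : RadiusSeparated ρ M) (z : E) :
    {x ∈ M | z ∈ ball x (2 * ρ x)}.encard ≤ ⌈(9 * (1 + 2 * k) / (1 - 2 * k)) ^ finrank ℝ E⌉₊ := by
  have hk' : 0 < 1 - 2 * k := by linarith
  have hρz := hρ z
  have hratio : 9 * ρ z / (4 * (1 - 2 * k)) / (ρ z / (4 * (1 + 2 * k)))
      = 9 * (1 + 2 * k) / (1 - 2 * k) := by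
    field_simp
  rw [← hratio]
  refine encard_le_of_pairwiseDisjoint_ball (r := fun x => ρ x / 4) (z := z)
    (by positivity) ?_ ?_
    (hM.mono (sep_subset _ _)).pairwiseDisjoint_ball
  · rintro x ⟨-, hx⟩
    have := (abs_sub_le_iff.1 (abs_sub_le_of_dist_lt_two_mul hlip hk0 hx)).1
    rw [div_le_div_iff₀ (by positivity) (by norm_num)]
    linarith
  · rintro x ⟨-, hx⟩ y hy
    have := (abs_sub_le_iff.1 (abs_sub_le_of_dist_lt_two_mul hlip hk0 hx)).2
    have hxR : 9 / 4 * ρ x ≤ 9 * ρ z / (4 * (1 - 2 * k)) := by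
      rw [le_div_iff₀ (by positivity)]
      linarith
    rw [mem_ball] at hx hy ⊢
    linarith [dist_triangle y x z, dist_comm x z]

end NormedSpace

/-- For every `N ≥ 1` and `0 ≤ k < 1/2` there is `ζ = ζ(N,k) ∈ ℕ` such
that: for every Lipschitz function `ρ : ℝ^N → (0,∞)` with Lipschitz constant `k`, there is
a countable family of points `(xₙ)` such that the balls `B(xₙ, ρ(xₙ))` cover `ℝ^N` and
at most `ζ` of the double balls `B(xₙ, 2ρ(xₙ))` overlap at any point. -/
theorem covering_with_finite_overlap (N : ℕ) (hN : 1 ≤ N) (k : ℝ) (hk0 : 0 ≤ k)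
    (hk : k < 1 / 2) :
    ∃ ζ : ℕ, ∀ ρ : EuclideanSpace ℝ (Fin N) → ℝ, (∀ x, 0 < ρ x) →
      (∀ x y, |ρ x - ρ y| ≤ k * ‖x - y‖) →
      ∃ c : ℕ → EuclideanSpace ℝ (Fin N),
        (∀ z : EuclideanSpace ℝ (Fin N), ∃ n : ℕ, z ∈ ball (c n) (ρ (c n)))
        ∧ ∀ z : EuclideanSpace ℝ (Fin N),
            ({n : ℕ | z ∈ ball (c n) (2 * ρ (c n))}).Finite
            ∧ ({n : ℕ | z ∈ ball (c n) (2 * ρ (c n))}).ncard ≤ ζ := by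
  have : NeZero N := ⟨by omega⟩
  refine ⟨⌈(9 * (1 + 2 * k) / (1 - 2 * k)) ^ N⌉₊, fun ρ hρ hlip => ?_⟩
  replace hlip : ∀ x y, |ρ x - ρ y| ≤ k * dist x y := by simpa only [dist_eq_norm] using hlip
  obtain ⟨M, hM⟩ := exists_maximal_radiusSeparated ρ
  have hcover := hM.exists_mem_ball_of_radiusSeparated hρ hlip (by linarith)
  obtain ⟨c, hc, rfl⟩ :=
    (hM.prop.countable hρ).exists_injective_range_eq (infinite_of_forall_exists_mem_ball hcover)
  refine ⟨c, fun z => ?_, fun z => ?_⟩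
  · obtain ⟨_, ⟨n, rfl⟩, hn⟩ := hcover z
    exact ⟨n, hn⟩
  · rw [← encard_le_coe_iff_finite_ncard_le]
    calc {n | z ∈ ball (c n) (2 * ρ (c n))}.encard
        = (c '' {n | z ∈ ball (c n) (2 * ρ (c n))}).encard := hc.injOn.encard_image.symm
      _ ≤ {x ∈ range c | z ∈ ball x (2 * ρ x)}.encard :=
        encard_le_encard (by rintro _ ⟨n, hn, rfl⟩; exact ⟨mem_range_self n, hn⟩)
      _ ≤ _ := by
        simpa only [finrank_euclideanSpace_fin]
          using hM.prop.encard_setOf_mem_ball_two_mul_le hρ hlip hk0 hk z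
end
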